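/- arXiv:2306.14682 — 6 statements merged into one kernel-verified Lean document; each statement's English description precedes it below -/
import Mathlib

section
/- Let q ≥ 1 and t ≥ 1 be integers. The number of functions f : Fin q → Fin t such that every fiber f⁻¹(c) has even cardinality is at most ⌊q/2⌋^{q+1} · t^{⌊q/2⌋}. -/
/-! Every fiber of such an `f` that is nonempty has at least two points, so `f` takes at most
`m = ⌊q/2⌋` values. Such an `f` factors as `Fin q → Fin m → Fin t`, and there are
`m^q · t^m` such pairs of maps. -/

open Finset

variable {α β : Type*} [Fintype α] [DecidableEq β]

theorem exists_comp_eq_of_card_image_le [Nonempty α] (f : α → β) {m : ℕ}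
    (hm : #(univ.image f) ≤ m) : ∃ (g : Fin m → β) (h : α → Fin m), g ∘ h = f := by
  let val (x : α) : univ.image f := ⟨f x, mem_image_of_mem f (mem_univ x)⟩
  obtain ⟨e⟩ := Function.Embedding.nonempty_of_card_le (α := univ.image f) (β := Fin m)
    (by simpa using hm)
  have : Nonempty (univ.image f) := ⟨val (Classical.arbitrary α)⟩
  refine ⟨Subtype.val ∘ Function.invFun e, e ∘ val, funext fun x => ?_⟩
  simp [Function.leftInverse_invFun e.injective (val x), val]

theorem card_filter_card_image_le [Nonempty α] [DecidableEq α] [Fintype β] (m : ℕ) :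
    #{f : α → β | #(univ.image f) ≤ m} ≤ m ^ Fintype.card α * Fintype.card β ^ m := by
  calc #{f : α → β | #(univ.image f) ≤ m}
      ≤ #(univ.image fun p : (Fin m → β) × (α → Fin m) => p.1 ∘ p.2) := by
        refine card_le_card fun f hf => ?_
        obtain ⟨g, h, rfl⟩ := exists_comp_eq_of_card_image_le f (mem_filter.1 hf).2
        exact mem_image_of_mem _ (mem_univ (g, h))
    _ ≤ Fintype.card ((Fin m → β) × (α → Fin m)) := card_image_le
    _ = m ^ Fintype.card α * Fintype.card β ^ m := by simp [mul_comm]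

theorem two_mul_card_image_le_of_even_card_fiber (f : α → β)
    (hf : ∀ c, Even #{x | f x = c}) : 2 * #(univ.image f) ≤ Fintype.card α := by
  have hfiber : ∀ c ∈ univ.image f, 2 ≤ #{x | f x = c} := by
    intro c hc
    obtain ⟨x, -, rfl⟩ := mem_image.1 hc
    have : 0 < #{y | f y = f x} := card_pos.2 ⟨x, by simp⟩
    obtain ⟨k, hk⟩ := hf (f x)
    omega
  calc 2 * #(univ.image f) = ∑ _c ∈ univ.image f, 2 := by simp [mul_comm]
    _ ≤ ∑ c ∈ univ.image f, #{x | f x = c} := sum_le_sum hfiber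
    _ = Fintype.card α := by simpa using (card_eq_sum_card_image f univ).symm

theorem count_even_fiber_functions_general (q t : ℕ) (hq : 1 ≤ q) :
    (Finset.univ.filter
        (fun f : Fin q → Fin t =>
          ∀ c : Fin t, Even ((Finset.univ.filter (fun x => f x = c)).card))).card
      ≤ (q / 2) ^ (q + 1) * t ^ (q / 2) := by
  have : Nonempty (Fin q) := ⟨⟨0, hq⟩⟩
  have hpow : (q / 2) ^ q ≤ (q / 2) ^ (q + 1) := by
    rcases Nat.eq_zero_or_pos (q / 2) with h | h
    · simp [h, Nat.one_le_iff_ne_zero.1 hq]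
    · exact Nat.pow_le_pow_right h q.le_succ
  calc _ ≤ #{f : Fin q → Fin t | #(univ.image f) ≤ q / 2} := by
        refine card_le_card (monotone_filter_right _ fun f _ hf => ?_)
        have := two_mul_card_image_le_of_even_card_fiber f hf
        rw [Fintype.card_fin] at this
        omega
    _ ≤ (q / 2) ^ q * t ^ (q / 2) := by
        simpa using card_filter_card_image_le (α := Fin q) (β := Fin t) (q / 2)
    _ ≤ (q / 2) ^ (q + 1) * t ^ (q / 2) := Nat.mul_le_mul_right _ hpow

/-- The number of functions `f : Fin q → Fin t` all of whose fibers have even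
cardinality is at most `⌊q/2⌋^(q+1) · t^⌊q/2⌋`. -/
theorem count_even_fiber_functions (q t : ℕ) (hq : 1 ≤ q) (ht : 1 ≤ t) :
    (Finset.univ.filter
        (fun f : Fin q → Fin t =>
          ∀ c : Fin t, Even ((Finset.univ.filter (fun x => f x = c)).card))).card
      ≤ (q / 2) ^ (q + 1) * t ^ (q / 2) :=
  count_even_fiber_functions_general q t hq
end

section
/- Let X be a type, m ≥ 1 an integer, and let a, b, c, d, e : Fin m → X be pairwise distinct functions. Then it is impossible that the equalities η(a,b) = η(c,e), η(a,c) = η(d,e), η(a,d) = η(b,c), η(a,e) = η(b,d), η(b,e) = η(c,d) all hold with the five common values pairwise distinct. (This is the impossibility, under the block coloring η₂, of a colored K₅ of color type (2,2,2,2,2) with no monochromatic copy of K_{1,2}.) -/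
/-- The block coloring `η`: for distinct `v w : Fin m → X`, `η(v,w) = (i, {v i, w i})`
where `i` is the least index at which `v` and `w` differ; `η(v,w)` is `none` if `v = w`. -/
noncomputable def eta {X : Type*} {m : ℕ} (v w : Fin m → X) : Option (Fin m × Sym2 X) := by
  classical
  exact if h : v ≠ w then
    some (
      let i := (Finset.univ.filter fun i => v i ≠ w i).min' (by
        obtain ⟨i, hi⟩ := Function.ne_iff.mp h
        exact ⟨i, Finset.mem_filter.mpr ⟨Finset.mem_univ _, hi⟩⟩)
      (i, s(v i, w i)))
  else none

private lemma eta_spec {X : Type*} {m : ℕ} {v w : Fin m → X} (h : v ≠ w) :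
    ∃ i : Fin m, eta v w = some (i, s(v i, w i)) ∧ v i ≠ w i ∧ ∀ j, j < i → v j = w j := by
  classical
  have hne : (Finset.univ.filter fun i => v i ≠ w i).Nonempty := by
    obtain ⟨i, hi⟩ := Function.ne_iff.mp h
    exact ⟨i, Finset.mem_filter.mpr ⟨Finset.mem_univ _, hi⟩⟩
  refine ⟨(Finset.univ.filter fun i => v i ≠ w i).min' hne, ?_, ?_, ?_⟩
  · simp only [eta, dif_pos h]
  · have := Finset.min'_mem _ hne
    simpa using (Finset.mem_filter.mp this).2
  · intro j hj
    by_contra hvw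
    exact absurd (Finset.min'_le _ j (Finset.mem_filter.mpr ⟨Finset.mem_univ _, hvw⟩))
      (not_le.mpr hj)

private lemma eta_eq {X : Type*} {m : ℕ} {v w : Fin m → X} {i : Fin m}
    (hne : v i ≠ w i) (hagr : ∀ j, j < i → v j = w j) :
    eta v w = some (i, s(v i, w i)) := by
  have hvw : v ≠ w := fun h => hne (congrFun h i)
  obtain ⟨k, hk, hkne, hkagr⟩ := eta_spec hvw
  have hki : k = i := by
    rcases lt_trichotomy k i with h | h | h
    · exact absurd (hagr k h) hkne
    · exact h
    · exact absurd (hkagr i h) hne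
  rw [hk, hki]

private lemma eta_symm {X : Type*} {m : ℕ} (v w : Fin m → X) : eta v w = eta w v := by
  by_cases h : v = w
  · rw [h]
  · obtain ⟨i, hk, hkne, hkagr⟩ := eta_spec h
    rw [hk, eta_eq (Ne.symm hkne) (fun j hj => (hkagr j hj).symm), Sym2.eq_swap]

private lemma idx_eq {X : Type*} {m : ℕ} {v w v' w' : Fin m → X} {i i' : Fin m}
    (h : eta v w = eta v' w')
    (hv : eta v w = some (i, s(v i, w i)))
    (hv' : eta v' w' = some (i', s(v' i', w' i'))) : i = i' := by
  rw [hv, hv'] at h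
  simp only [Option.some.injEq, Prod.mk.injEq] at h
  exact h.1

private lemma key {X : Type*} {m : ℕ} {a b c d e : Fin m → X} {i : Fin m}
    (hce : c ≠ e)
    (hi : eta a b = some (i, s(a i, b i))) (habi : a i ≠ b i)
    (h1 : eta a b = eta c e) (h3 : eta a d = eta b c)
    (n2 : eta a b ≠ eta a c) (n3 : eta a b ≠ eta a d)
    (hAC : ∀ j, j < i → a j = c j) (hBC : ∀ j, j < i → b j = c j) : False := by
  obtain ⟨k, hk, hkne, hkagr⟩ := eta_spec hce
  have hik : k = i := idx_eq h1.symm hk hi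
  subst hik
  have hpair : s(c k, e k) = s(a k, b k) := by
    have h' := h1
    rw [hi, hk] at h'
    simp only [Option.some.injEq, Prod.mk.injEq] at h'
    exact h'.2.symm
  rw [Sym2.eq_iff] at hpair
  rcases hpair with ⟨h1', h2'⟩ | ⟨h1', h2'⟩
  · -- c k = a k
    have hbck : b k ≠ c k := by rw [h1']; exact fun h => habi h.symm
    have hbc : eta b c = some (k, s(b k, c k)) :=
      eta_eq hbck hBC
    apply n3
    rw [h3, hbc, hi, h1', Sym2.eq_swap]
  · -- c k = b k
    have hack : a k ≠ c k := by rw [h1']; exact habi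
    have hacq : eta a c = some (k, s(a k, c k)) := eta_eq hack hAC
    apply n2
    rw [hacq, hi, h1']

/-- Under the coloring `η` there is no colored `K₅` of color type `(2,2,2,2,2)` with no
monochromatic copy of `K_{1,2}`: the pattern
`η(a,b)=η(c,e)`, `η(a,c)=η(d,e)`, `η(a,d)=η(b,c)`, `η(a,e)=η(b,d)`, `η(b,e)=η(c,d)`
with the five common values pairwise distinct is impossible. -/
theorem no_K5_no_mono_cherry {X : Type*} {m : ℕ} (hm : 1 ≤ m)
    (a b c d e : Fin m → X)
    (hab : a ≠ b) (hac : a ≠ c) (had : a ≠ d) (hae : a ≠ e)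
    (hbc : b ≠ c) (hbd : b ≠ d) (hbe : b ≠ e)
    (hcd : c ≠ d) (hce : c ≠ e) (hde : d ≠ e) :
    ¬ (eta a b = eta c e ∧ eta a c = eta d e ∧ eta a d = eta b c ∧
       eta a e = eta b d ∧ eta b e = eta c d ∧
       eta a b ≠ eta a c ∧ eta a b ≠ eta a d ∧ eta a b ≠ eta a e ∧ eta a b ≠ eta b e ∧
       eta a c ≠ eta a d ∧ eta a c ≠ eta a e ∧ eta a c ≠ eta b e ∧
       eta a d ≠ eta a e ∧ eta a d ≠ eta b e ∧
       eta a e ≠ eta b e) := by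
  rintro ⟨h1, h2, h3, h4, h5, n12, n13, n14, n15, n23, n24, n25, n34, n35, n45⟩
  obtain ⟨i1, sAB, dAB, gAB⟩ := eta_spec hab
  obtain ⟨i2, sAC, dAC, gAC⟩ := eta_spec hac
  obtain ⟨i3, sAD, dAD, gAD⟩ := eta_spec had
  obtain ⟨i4, sAE, dAE, gAE⟩ := eta_spec hae
  obtain ⟨i5, sBE, dBE, gBE⟩ := eta_spec hbe
  obtain ⟨j1, sCE, dCE, gCE⟩ := eta_spec hce
  obtain ⟨j2, sDE, dDE, gDE⟩ := eta_spec hde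
  obtain ⟨j3, sBC, dBC, gBC⟩ := eta_spec hbc
  obtain ⟨j4, sBD, dBD, gBD⟩ := eta_spec hbd
  obtain ⟨j5, sCD, dCD, gCD⟩ := eta_spec hcd
  have e1 : i1 = j1 := idx_eq h1 sAB sCE
  have e2 : i2 = j2 := idx_eq h2 sAC sDE
  have e3 : i3 = j3 := idx_eq h3 sAD sBC
  have e4 : i4 = j4 := idx_eq h4 sAE sBD
  have e5 : i5 = j5 := idx_eq h5 sBE sCD
  rw [← e1] at sCE dCE gCE
  rw [← e2] at sDE dDE gDE
  rw [← e3] at sBC dBC gBC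
  rw [← e4] at sBD dBD gBD
  rw [← e5] at sCD dCD gCD
  obtain ⟨k, hkmem, hkmin⟩ :=
    Finset.exists_min_image ({i1, i2, i3, i4, i5} : Finset (Fin m)) id ⟨i1, by simp⟩
  simp only [Finset.mem_insert, Finset.mem_singleton] at hkmem
  rcases hkmem with rfl | rfl | rfl | rfl | rfl
  · -- k = i1 : tuple (a,b,c,d,e)
    exact key hce sAB dAB h1 h3 n12 n13
      (fun j hj => gAC j (hj.trans_le (hkmin i2 (by simp))))
      (fun j hj => gBC j (hj.trans_le (hkmin i3 (by simp))))
  · -- k = i2 : tuple (d,e,a,b,c)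
    exact key hac sDE dDE h2.symm
      (by rw [eta_symm d b, eta_symm e a]; exact h4.symm)
      (by rw [← h2, eta_symm d a]; exact n23)
      (by rw [← h2, eta_symm d b, ← h4]; exact n24)
      (fun j hj => (gAD j (hj.trans_le (hkmin i3 (by simp)))).symm)
      (fun j hj => (gAE j (hj.trans_le (hkmin i4 (by simp)))).symm)
  · -- k = i3 : tuple (b,c,d,e,a)
    exact key (Ne.symm had) sBC dBC
      (by rw [eta_symm d a]; exact h3.symm) h5
      (by rw [← h3, ← h4]; exact n34)
      (by rw [← h3]; exact n35)
      (fun j hj => gBD j (hj.trans_le (hkmin i4 (by simp))))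
      (fun j hj => gCD j (hj.trans_le (hkmin i5 (by simp))))
  · -- k = i4 : tuple (e,a,b,c,d)
    exact key hbd
      (by rw [eta_symm e a, sAE, Sym2.eq_swap]) (Ne.symm dAE)
      (by rw [eta_symm e a]; exact h4)
      (by rw [eta_symm e c]; exact h1.symm)
      (by rw [eta_symm e a, eta_symm e b]; exact n45)
      (by rw [eta_symm e a, eta_symm e c, ← h1]; exact n14.symm)
      (fun j hj => (gBE j (hj.trans_le (hkmin i5 (by simp)))).symm)
      (fun j hj => gAB j (hj.trans_le (hkmin i1 (by simp))))
  · -- k = i5 : tuple (c,d,e,a,b)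
    exact key (Ne.symm hbe) sCD dCD
      (by rw [eta_symm e b]; exact h5.symm)
      (by rw [eta_symm c a]; exact h2)
      (by rw [← h5, ← h1]; exact n15.symm)
      (by rw [← h5, eta_symm c a]; exact n25.symm)
      (fun j hj => gCE j (hj.trans_le (hkmin i1 (by simp))))
      (fun j hj => gDE j (hj.trans_le (hkmin i2 (by simp))))
end

section
/- Let X be a type, m ≥ 1 an integer, and let a, b, c, d, e : Fin m → X be pairwise distinct functions. Then it is impossible that the equalities η(a,b) = η(a,c), η(a,d) = η(d,e), η(a,e) = η(c,e), η(b,c) = η(c,d), η(b,d) = η(b,e) all hold with the five common values pairwise distinct. (This is the impossibility, under the block coloring η₂, of a colored K₅ of color type (2,2,2,2,2) formed by five edge-disjoint monochromatic copies of K_{1,2}.) -/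
namespace EtaAux
open scoped Classical
variable {X : Type*} {m : ℕ}

noncomputable def fd (v w : Fin m → X) (h : v ≠ w) : Fin m :=
  (Finset.univ.filter fun i => v i ≠ w i).min' (by
    obtain ⟨i, hi⟩ := Function.ne_iff.mp h
    exact ⟨i, Finset.mem_filter.mpr ⟨Finset.mem_univ _, hi⟩⟩)

lemma eta_some (v w : Fin m → X) (h : v ≠ w) :
    eta v w = some (fd v w h, s(v (fd v w h), w (fd v w h))) := by
  simp [eta, dif_pos h, fd]

lemma fd_ne (v w : Fin m → X) (h : v ≠ w) : v (fd v w h) ≠ w (fd v w h) := by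
  have hmem := Finset.min'_mem (Finset.univ.filter fun i => v i ≠ w i) (by
    obtain ⟨i, hi⟩ := Function.ne_iff.mp h
    exact ⟨i, Finset.mem_filter.mpr ⟨Finset.mem_univ _, hi⟩⟩)
  simpa [fd] using (Finset.mem_filter.mp hmem).2

lemma eq_of_lt_fd (v w : Fin m → X) (h : v ≠ w) {j : Fin m} (hj : j < fd v w h) :
    v j = w j := by
  by_contra hne
  exact absurd
    (Finset.min'_le (Finset.univ.filter fun i => v i ≠ w i) j
      (Finset.mem_filter.mpr ⟨Finset.mem_univ _, hne⟩)) (not_le.mpr hj)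

lemma lt_fd (v w : Fin m → X) (h : v ≠ w) {i : Fin m} (hi : ∀ j ≤ i, v j = w j) :
    i < fd v w h := by
  apply (Finset.lt_min'_iff _ _).mpr
  intro y hy
  by_contra hle
  exact (Finset.mem_filter.mp hy).2 (hi y (not_lt.mp hle))

lemma eta_eq_elim (u v u' v' : Fin m → X) (h : u ≠ v) (h' : u' ≠ v')
    (heq : eta u v = eta u' v') :
    fd u v h = fd u' v' h' ∧
      s(u (fd u v h), v (fd u v h)) = s(u' (fd u' v' h'), v' (fd u' v' h')) := by
  rw [eta_some u v h, eta_some u' v' h'] at heq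
  simpa [Prod.ext_iff] using heq

/-- Shared vertex `u`, first-first: `η(u,v) = η(u,w)`. -/
lemma cherryFF (u v w : Fin m → X) (huv : u ≠ v) (huw : u ≠ w) (hvw : v ≠ w)
    (heq : eta u v = eta u w) :
    fd u v huv = fd u w huw ∧ fd u v huv < fd v w hvw := by
  obtain ⟨hi, hs⟩ := eta_eq_elim u v u w huv huw heq
  refine ⟨hi, ?_⟩
  rw [← hi] at hs
  set i := fd u v huv with hidef
  have hval : v i = w i := by
    rcases Sym2.eq_iff.mp hs with ⟨h1, h2⟩ | ⟨h1, h2⟩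
    · exact h2
    · exact h2.trans h1
  refine lt_fd v w hvw fun j hj => ?_
  rcases lt_or_eq_of_le hj with hlt | rfl
  · rw [← eq_of_lt_fd u v huv hlt, eq_of_lt_fd u w huw (hi ▸ hlt)]
  · exact hval

/-- Shared vertex `x`, second-first: `η(u,x) = η(x,w)`. -/
lemma cherrySF (u x w : Fin m → X) (hux : u ≠ x) (hxw : x ≠ w) (huw : u ≠ w)
    (heq : eta u x = eta x w) :
    fd u x hux = fd x w hxw ∧ fd u x hux < fd u w huw := by
  obtain ⟨hi, hs⟩ := eta_eq_elim u x x w hux hxw heq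
  refine ⟨hi, ?_⟩
  rw [← hi] at hs
  set i := fd u x hux with hidef
  have hval : u i = w i := by
    rcases Sym2.eq_iff.mp hs with ⟨h1, h2⟩ | ⟨h1, h2⟩
    · exact absurd h1 (fd_ne u x hux)
    · exact h1
  refine lt_fd u w huw fun j hj => ?_
  rcases lt_or_eq_of_le hj with hlt | rfl
  · rw [eq_of_lt_fd u x hux hlt, eq_of_lt_fd x w hxw (hi ▸ hlt)]
  · exact hval

/-- Shared vertex `x`, second-second: `η(u,x) = η(w,x)`. -/
lemma cherrySS (u x w : Fin m → X) (hux : u ≠ x) (hwx : w ≠ x) (huw : u ≠ w)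
    (heq : eta u x = eta w x) :
    fd u x hux = fd w x hwx ∧ fd u x hux < fd u w huw := by
  obtain ⟨hi, hs⟩ := eta_eq_elim u x w x hux hwx heq
  refine ⟨hi, ?_⟩
  rw [← hi] at hs
  set i := fd u x hux with hidef
  have hval : u i = w i := by
    rcases Sym2.eq_iff.mp hs with ⟨h1, h2⟩ | ⟨h1, h2⟩
    · exact h1
    · exact absurd h1 (fd_ne u x hux)
  refine lt_fd u w huw fun j hj => ?_
  rcases lt_or_eq_of_le hj with hlt | rfl
  · rw [eq_of_lt_fd u x hux hlt, eq_of_lt_fd w x hwx (hi ▸ hlt)]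
  · exact hval

end EtaAux


/-- Under the coloring `η` there is no colored `K₅` of color type `(2,2,2,2,2)` formed by
five edge-disjoint monochromatic copies of `K_{1,2}`: the pattern
`η(a,b)=η(a,c)`, `η(a,d)=η(d,e)`, `η(a,e)=η(c,e)`, `η(b,c)=η(c,d)`, `η(b,d)=η(b,e)`
with the five common values pairwise distinct is impossible. -/
theorem no_K5_five_mono_cherries {X : Type*} {m : ℕ} (hm : 1 ≤ m)
    (a b c d e : Fin m → X)
    (hab : a ≠ b) (hac : a ≠ c) (had : a ≠ d) (hae : a ≠ e)
    (hbc : b ≠ c) (hbd : b ≠ d) (hbe : b ≠ e)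
    (hcd : c ≠ d) (hce : c ≠ e) (hde : d ≠ e) :
    ¬ (eta a b = eta a c ∧ eta a d = eta d e ∧ eta a e = eta c e ∧
       eta b c = eta c d ∧ eta b d = eta b e ∧
       eta a b ≠ eta a d ∧ eta a b ≠ eta a e ∧ eta a b ≠ eta b c ∧ eta a b ≠ eta b d ∧
       eta a d ≠ eta a e ∧ eta a d ≠ eta b c ∧ eta a d ≠ eta b d ∧
       eta a e ≠ eta b c ∧ eta a e ≠ eta b d ∧
       eta b c ≠ eta b d) := by
  rintro ⟨h1, h2, h3, h4, h5, -⟩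
  obtain ⟨e1, l1⟩ := EtaAux.cherryFF a b c hab hac hbc h1
  obtain ⟨e2, l2⟩ := EtaAux.cherrySF a d e had hde hae h2
  obtain ⟨e3, l3⟩ := EtaAux.cherrySS a e c hae hce hac h3
  obtain ⟨e4, l4⟩ := EtaAux.cherrySF b c d hbc hcd hbd h4
  obtain ⟨e5, l5⟩ := EtaAux.cherryFF b d e hbd hbe hde h5
  have : EtaAux.fd a d had < EtaAux.fd a d had := by
    calc EtaAux.fd a d had < EtaAux.fd a e hae := l2
      _ < EtaAux.fd a c hac := l3
      _ = EtaAux.fd a b hab := e1.symm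
      _ < EtaAux.fd b c hbc := l1
      _ < EtaAux.fd b d hbd := l4
      _ < EtaAux.fd d e hde := l5
      _ = EtaAux.fd a d had := e2.symm
  exact absurd this (lt_irrefl _)
end

section
/- Let χ be an edge coloring of the complete graph on vertex set Fin 5 of color type (2,2,2,2,2) that satisfies property (P1'). Then there is no vertex v such that v is the center of a monochromatic cherry and the induced coloring on the four vertices other than v contains exactly one monochromatic cherry (a monochromatic cherry all of whose three vertices avoid v). (This is Claim 4.1: no special vertex can be associated with a vector (s, 1).) -/
/-- The coloring `χ` of `K₅` (on the non-diagonal elements of `Sym2 (Fin 5)`) has color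
type `(2,2,2,2,2)`: every color class is empty or consists of exactly two edges. -/
def ColorType22222 {C : Type*} [DecidableEq C] (χ : Sym2 (Fin 5) → C) : Prop :=
  ∀ c : C,
    ((Finset.univ.filter fun e : Sym2 (Fin 5) => ¬ e.IsDiag ∧ χ e = c).card = 0 ∨
     (Finset.univ.filter fun e : Sym2 (Fin 5) => ¬ e.IsDiag ∧ χ e = c).card = 2)

/-- Property (P1'): there are no four pairwise distinct vertices `a, b, c, d` with
`χ(ab) = χ(cd)` and `χ(ac) = χ(ad)`. -/
def PropP1 {C : Type*} (χ : Sym2 (Fin 5) → C) : Prop :=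
  ¬ ∃ a b c d : Fin 5, a ≠ b ∧ a ≠ c ∧ a ≠ d ∧ b ≠ c ∧ b ≠ d ∧ c ≠ d ∧
      χ s(a, b) = χ s(c, d) ∧ χ s(a, c) = χ s(a, d)

/-- Property (P2'): there are no four pairwise distinct vertices such that on the six
edges among them exactly three colors appear, each on exactly two edges. -/
def PropP2 {C : Type*} [DecidableEq C] (χ : Sym2 (Fin 5) → C) : Prop :=
  ¬ ∃ a b c d : Fin 5, a ≠ b ∧ a ≠ c ∧ a ≠ d ∧ b ≠ c ∧ b ≠ d ∧ c ≠ d ∧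
      ((({s(a, b), s(a, c), s(a, d), s(b, c), s(b, d), s(c, d)} :
          Finset (Sym2 (Fin 5))).image χ).card = 3 ∧
       ∀ col ∈ (({s(a, b), s(a, c), s(a, d), s(b, c), s(b, d), s(c, d)} :
          Finset (Sym2 (Fin 5))).image χ),
         (({s(a, b), s(a, c), s(a, d), s(b, c), s(b, d), s(c, d)} :
            Finset (Sym2 (Fin 5))).filter fun e => χ e = col).card = 2)

/-- The monochromatic cherries of `χ`: pairs `(u, {x, y})` where `u` is the center,
`x ≠ y` are the leaves (distinct from `u`), and `χ(ux) = χ(uy)`. -/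
def cherries {C : Type*} [DecidableEq C] (χ : Sym2 (Fin 5) → C) :
    Finset (Fin 5 × Finset (Fin 5)) :=
  Finset.univ.filter fun p =>
    p.2.card = 2 ∧ p.1 ∉ p.2 ∧
      ∃ x ∈ p.2, ∃ y ∈ p.2, x ≠ y ∧ χ s(p.1, x) = χ s(p.1, y)

/-- The number of monochromatic cherries of `χ` having `v` as a leaf. -/
def leafCount {C : Type*} [DecidableEq C] (χ : Sym2 (Fin 5) → C) (v : Fin 5) : ℕ :=
  ((cherries χ).filter fun p => v ∈ p.2).card

instance {C : Type*} [DecidableEq C] (χ : Sym2 (Fin 5) → C) : Decidable (PropP1 χ) := by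
  unfold PropP1; infer_instance

def cherryT {C : Type*} [DecidableEq C] (χ : Sym2 (Fin 5) → C) : Finset (Fin 5 × Fin 5 × Fin 5) :=
  Finset.univ.filter fun t =>
    t.2.1 < t.2.2 ∧ t.1 ≠ t.2.1 ∧ t.1 ≠ t.2.2 ∧ χ s(t.1, t.2.1) = χ s(t.1, t.2.2)

def pidx (a b : ℕ) : ℕ :=
  (min a b) * (9 - min a b) / 2 + max a b - min a b - 1

def eidx : Sym2 (Fin 5) → ℕ :=
  Sym2.lift ⟨fun u v => pidx u.val v.val, by
    intro u v; simp [pidx, Nat.min_comm, Nat.max_comm, min_comm, max_comm]⟩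

def EE : ℕ → Sym2 (Fin 5) := fun n =>
  match n with
  | 0 => s(0,1) | 1 => s(0,2) | 2 => s(0,3) | 3 => s(0,4)
  | 4 => s(1,2) | 5 => s(1,3) | 6 => s(1,4)
  | 7 => s(2,3) | 8 => s(2,4) | _ => s(3,4)

def mkCol (l : List ℕ) : Sym2 (Fin 5) → ℕ := fun e =>
  if e.IsDiag then 100 else min (eidx e) (l.getD (eidx e) 0)

lemma hE1 : ∀ e : Sym2 (Fin 5), ¬e.IsDiag → EE (eidx e) = e ∧ eidx e < 10 := by decide

lemma hE2 : ∀ i : Fin 10, ¬(EE i.val).IsDiag ∧ eidx (EE i.val) = i.val := by decide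

lemma ndiag {u w : Fin 5} (h : u ≠ w) : ¬(s(u,w)).IsDiag := fun hd => h (Sym2.mk_isDiag_iff.mp hd)

lemma pairEq {x y x' y' : Fin 5} (h1 : x < y) (h2 : x' < y')
    (h : ({x, y} : Finset (Fin 5)) = {x', y'}) : x = x' ∧ y = y' := by
  have hx : x ∈ ({x', y'} : Finset (Fin 5)) := h ▸ Finset.mem_insert_self x {y}
  have hy : y ∈ ({x', y'} : Finset (Fin 5)) := h ▸ (by simp : y ∈ ({x, y} : Finset (Fin 5)))
  have hx' : x' ∈ ({x, y} : Finset (Fin 5)) := h ▸ Finset.mem_insert_self x' {y'}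
  have hy' : y' ∈ ({x, y} : Finset (Fin 5)) := h ▸ (by simp : y' ∈ ({x', y'} : Finset (Fin 5)))
  simp only [Finset.mem_insert, Finset.mem_singleton] at hx hy hx' hy'
  rcases hx with rfl | rfl
  · rcases hy with rfl | rfl
    · exact absurd h1 (lt_irrefl _)
    · exact ⟨rfl, rfl⟩
  · rcases hy with rfl | rfl
    · exact absurd (h1.trans h2) (lt_irrefl _)
    · exact absurd h1 (lt_irrefl _)

set_option synthInstance.maxSize 100000 in
set_option synthInstance.maxHeartbeats 4000000 in
set_option maxRecDepth 100000 in
set_option maxHeartbeats 0 in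
lemma core1 :
    ∀ a1 : Fin 10, (a1 ≠ 1 ∧ a1 ≠ (1 : Fin 10) ∧ ((1 : Fin 10) = 1 ↔ a1 = 0)) →
    ∀ a2 : Fin 10, (a2 ≠ 2 ∧ a2 ≠ (1 : Fin 10) ∧ ((1 : Fin 10) = 2 ↔ a2 = 0) ∧ a2 ≠ a1 ∧ (a1 = 2 ↔ a2 = 1)) →
    ∀ a3 : Fin 10, (a3 ≠ 3 ∧ a3 ≠ (1 : Fin 10) ∧ ((1 : Fin 10) = 3 ↔ a3 = 0) ∧ a3 ≠ a1 ∧ (a1 = 3 ↔ a3 = 1) ∧ a3 ≠ a2 ∧ (a2 = 3 ↔ a3 = 2)) →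
    ∀ a4 : Fin 10, (a4 ≠ 4 ∧ a4 ≠ (1 : Fin 10) ∧ ((1 : Fin 10) = 4 ↔ a4 = 0) ∧ a4 ≠ a1 ∧ (a1 = 4 ↔ a4 = 1) ∧ a4 ≠ a2 ∧ (a2 = 4 ↔ a4 = 2) ∧ a4 ≠ a3 ∧ (a3 = 4 ↔ a4 = 3)) →
    ∀ a5 : Fin 10, (a5 ≠ 5 ∧ a5 ≠ (1 : Fin 10) ∧ ((1 : Fin 10) = 5 ↔ a5 = 0) ∧ a5 ≠ a1 ∧ (a1 = 5 ↔ a5 = 1) ∧ a5 ≠ a2 ∧ (a2 = 5 ↔ a5 = 2) ∧ a5 ≠ a3 ∧ (a3 = 5 ↔ a5 = 3) ∧ a5 ≠ a4 ∧ (a4 = 5 ↔ a5 = 4)) →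
    ∀ a6 : Fin 10, (a6 ≠ 6 ∧ a6 ≠ (1 : Fin 10) ∧ ((1 : Fin 10) = 6 ↔ a6 = 0) ∧ a6 ≠ a1 ∧ (a1 = 6 ↔ a6 = 1) ∧ a6 ≠ a2 ∧ (a2 = 6 ↔ a6 = 2) ∧ a6 ≠ a3 ∧ (a3 = 6 ↔ a6 = 3) ∧ a6 ≠ a4 ∧ (a4 = 6 ↔ a6 = 4) ∧ a6 ≠ a5 ∧ (a5 = 6 ↔ a6 = 5)) →
    ∀ a7 : Fin 10, (a7 ≠ 7 ∧ a7 ≠ (1 : Fin 10) ∧ ((1 : Fin 10) = 7 ↔ a7 = 0) ∧ a7 ≠ a1 ∧ (a1 = 7 ↔ a7 = 1) ∧ a7 ≠ a2 ∧ (a2 = 7 ↔ a7 = 2) ∧ a7 ≠ a3 ∧ (a3 = 7 ↔ a7 = 3) ∧ a7 ≠ a4 ∧ (a4 = 7 ↔ a7 = 4) ∧ a7 ≠ a5 ∧ (a5 = 7 ↔ a7 = 5) ∧ a7 ≠ a6 ∧ (a6 = 7 ↔ a7 = 6)) →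
    ∀ a8 : Fin 10, (a8 ≠ 8 ∧ a8 ≠ (1 : Fin 10) ∧ ((1 : Fin 10) = 8 ↔ a8 = 0) ∧ a8 ≠ a1 ∧ (a1 = 8 ↔ a8 = 1) ∧ a8 ≠ a2 ∧ (a2 = 8 ↔ a8 = 2) ∧ a8 ≠ a3 ∧ (a3 = 8 ↔ a8 = 3) ∧ a8 ≠ a4 ∧ (a4 = 8 ↔ a8 = 4) ∧ a8 ≠ a5 ∧ (a5 = 8 ↔ a8 = 5) ∧ a8 ≠ a6 ∧ (a6 = 8 ↔ a8 = 6) ∧ a8 ≠ a7 ∧ (a7 = 8 ↔ a8 = 7)) →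
    ∀ a9 : Fin 10, (a9 ≠ 9 ∧ a9 ≠ (1 : Fin 10) ∧ ((1 : Fin 10) = 9 ↔ a9 = 0) ∧ a9 ≠ a1 ∧ (a1 = 9 ↔ a9 = 1) ∧ a9 ≠ a2 ∧ (a2 = 9 ↔ a9 = 2) ∧ a9 ≠ a3 ∧ (a3 = 9 ↔ a9 = 3) ∧ a9 ≠ a4 ∧ (a4 = 9 ↔ a9 = 4) ∧ a9 ≠ a5 ∧ (a5 = 9 ↔ a9 = 5) ∧ a9 ≠ a6 ∧ (a6 = 9 ↔ a9 = 6) ∧ a9 ≠ a7 ∧ (a7 = 9 ↔ a9 = 7) ∧ a9 ≠ a8 ∧ (a8 = 9 ↔ a9 = 8)) →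
    PropP1 (mkCol [((1 : Fin 10) : ℕ), (a1 : ℕ), (a2 : ℕ), (a3 : ℕ), (a4 : ℕ), (a5 : ℕ), (a6 : ℕ), (a7 : ℕ), (a8 : ℕ), (a9 : ℕ)]) →
    ¬ ∃ v : Fin 5,
        (∃ x y : Fin 5, (v,x,y) ∈ cherryT (mkCol [((1 : Fin 10) : ℕ), (a1 : ℕ), (a2 : ℕ), (a3 : ℕ), (a4 : ℕ), (a5 : ℕ), (a6 : ℕ), (a7 : ℕ), (a8 : ℕ), (a9 : ℕ)])) ∧
        ((cherryT (mkCol [((1 : Fin 10) : ℕ), (a1 : ℕ), (a2 : ℕ), (a3 : ℕ), (a4 : ℕ), (a5 : ℕ), (a6 : ℕ), (a7 : ℕ), (a8 : ℕ), (a9 : ℕ)])).filter fun t => t.1 ≠ v ∧ t.2.1 ≠ v ∧ t.2.2 ≠ v).card = 1 := by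
  decide

set_option synthInstance.maxSize 100000 in
set_option synthInstance.maxHeartbeats 4000000 in
set_option maxRecDepth 100000 in
set_option maxHeartbeats 0 in
lemma core2 :
    ∀ a1 : Fin 10, (a1 ≠ 1 ∧ a1 ≠ (2 : Fin 10) ∧ ((2 : Fin 10) = 1 ↔ a1 = 0)) →
    ∀ a2 : Fin 10, (a2 ≠ 2 ∧ a2 ≠ (2 : Fin 10) ∧ ((2 : Fin 10) = 2 ↔ a2 = 0) ∧ a2 ≠ a1 ∧ (a1 = 2 ↔ a2 = 1)) →
    ∀ a3 : Fin 10, (a3 ≠ 3 ∧ a3 ≠ (2 : Fin 10) ∧ ((2 : Fin 10) = 3 ↔ a3 = 0) ∧ a3 ≠ a1 ∧ (a1 = 3 ↔ a3 = 1) ∧ a3 ≠ a2 ∧ (a2 = 3 ↔ a3 = 2)) →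
    ∀ a4 : Fin 10, (a4 ≠ 4 ∧ a4 ≠ (2 : Fin 10) ∧ ((2 : Fin 10) = 4 ↔ a4 = 0) ∧ a4 ≠ a1 ∧ (a1 = 4 ↔ a4 = 1) ∧ a4 ≠ a2 ∧ (a2 = 4 ↔ a4 = 2) ∧ a4 ≠ a3 ∧ (a3 = 4 ↔ a4 = 3)) →
    ∀ a5 : Fin 10, (a5 ≠ 5 ∧ a5 ≠ (2 : Fin 10) ∧ ((2 : Fin 10) = 5 ↔ a5 = 0) ∧ a5 ≠ a1 ∧ (a1 = 5 ↔ a5 = 1) ∧ a5 ≠ a2 ∧ (a2 = 5 ↔ a5 = 2) ∧ a5 ≠ a3 ∧ (a3 = 5 ↔ a5 = 3) ∧ a5 ≠ a4 ∧ (a4 = 5 ↔ a5 = 4)) →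
    ∀ a6 : Fin 10, (a6 ≠ 6 ∧ a6 ≠ (2 : Fin 10) ∧ ((2 : Fin 10) = 6 ↔ a6 = 0) ∧ a6 ≠ a1 ∧ (a1 = 6 ↔ a6 = 1) ∧ a6 ≠ a2 ∧ (a2 = 6 ↔ a6 = 2) ∧ a6 ≠ a3 ∧ (a3 = 6 ↔ a6 = 3) ∧ a6 ≠ a4 ∧ (a4 = 6 ↔ a6 = 4) ∧ a6 ≠ a5 ∧ (a5 = 6 ↔ a6 = 5)) →
    ∀ a7 : Fin 10, (a7 ≠ 7 ∧ a7 ≠ (2 : Fin 10) ∧ ((2 : Fin 10) = 7 ↔ a7 = 0) ∧ a7 ≠ a1 ∧ (a1 = 7 ↔ a7 = 1) ∧ a7 ≠ a2 ∧ (a2 = 7 ↔ a7 = 2) ∧ a7 ≠ a3 ∧ (a3 = 7 ↔ a7 = 3) ∧ a7 ≠ a4 ∧ (a4 = 7 ↔ a7 = 4) ∧ a7 ≠ a5 ∧ (a5 = 7 ↔ a7 = 5) ∧ a7 ≠ a6 ∧ (a6 = 7 ↔ a7 = 6)) →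
    ∀ a8 : Fin 10, (a8 ≠ 8 ∧ a8 ≠ (2 : Fin 10) ∧ ((2 : Fin 10) = 8 ↔ a8 = 0) ∧ a8 ≠ a1 ∧ (a1 = 8 ↔ a8 = 1) ∧ a8 ≠ a2 ∧ (a2 = 8 ↔ a8 = 2) ∧ a8 ≠ a3 ∧ (a3 = 8 ↔ a8 = 3) ∧ a8 ≠ a4 ∧ (a4 = 8 ↔ a8 = 4) ∧ a8 ≠ a5 ∧ (a5 = 8 ↔ a8 = 5) ∧ a8 ≠ a6 ∧ (a6 = 8 ↔ a8 = 6) ∧ a8 ≠ a7 ∧ (a7 = 8 ↔ a8 = 7)) →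
    ∀ a9 : Fin 10, (a9 ≠ 9 ∧ a9 ≠ (2 : Fin 10) ∧ ((2 : Fin 10) = 9 ↔ a9 = 0) ∧ a9 ≠ a1 ∧ (a1 = 9 ↔ a9 = 1) ∧ a9 ≠ a2 ∧ (a2 = 9 ↔ a9 = 2) ∧ a9 ≠ a3 ∧ (a3 = 9 ↔ a9 = 3) ∧ a9 ≠ a4 ∧ (a4 = 9 ↔ a9 = 4) ∧ a9 ≠ a5 ∧ (a5 = 9 ↔ a9 = 5) ∧ a9 ≠ a6 ∧ (a6 = 9 ↔ a9 = 6) ∧ a9 ≠ a7 ∧ (a7 = 9 ↔ a9 = 7) ∧ a9 ≠ a8 ∧ (a8 = 9 ↔ a9 = 8)) →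
    PropP1 (mkCol [((2 : Fin 10) : ℕ), (a1 : ℕ), (a2 : ℕ), (a3 : ℕ), (a4 : ℕ), (a5 : ℕ), (a6 : ℕ), (a7 : ℕ), (a8 : ℕ), (a9 : ℕ)]) →
    ¬ ∃ v : Fin 5,
        (∃ x y : Fin 5, (v,x,y) ∈ cherryT (mkCol [((2 : Fin 10) : ℕ), (a1 : ℕ), (a2 : ℕ), (a3 : ℕ), (a4 : ℕ), (a5 : ℕ), (a6 : ℕ), (a7 : ℕ), (a8 : ℕ), (a9 : ℕ)])) ∧
        ((cherryT (mkCol [((2 : Fin 10) : ℕ), (a1 : ℕ), (a2 : ℕ), (a3 : ℕ), (a4 : ℕ), (a5 : ℕ), (a6 : ℕ), (a7 : ℕ), (a8 : ℕ), (a9 : ℕ)])).filter fun t => t.1 ≠ v ∧ t.2.1 ≠ v ∧ t.2.2 ≠ v).card = 1 := by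
  decide

set_option synthInstance.maxSize 100000 in
set_option synthInstance.maxHeartbeats 4000000 in
set_option maxRecDepth 100000 in
set_option maxHeartbeats 0 in
lemma core3 :
    ∀ a1 : Fin 10, (a1 ≠ 1 ∧ a1 ≠ (3 : Fin 10) ∧ ((3 : Fin 10) = 1 ↔ a1 = 0)) →
    ∀ a2 : Fin 10, (a2 ≠ 2 ∧ a2 ≠ (3 : Fin 10) ∧ ((3 : Fin 10) = 2 ↔ a2 = 0) ∧ a2 ≠ a1 ∧ (a1 = 2 ↔ a2 = 1)) →
    ∀ a3 : Fin 10, (a3 ≠ 3 ∧ a3 ≠ (3 : Fin 10) ∧ ((3 : Fin 10) = 3 ↔ a3 = 0) ∧ a3 ≠ a1 ∧ (a1 = 3 ↔ a3 = 1) ∧ a3 ≠ a2 ∧ (a2 = 3 ↔ a3 = 2)) →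
    ∀ a4 : Fin 10, (a4 ≠ 4 ∧ a4 ≠ (3 : Fin 10) ∧ ((3 : Fin 10) = 4 ↔ a4 = 0) ∧ a4 ≠ a1 ∧ (a1 = 4 ↔ a4 = 1) ∧ a4 ≠ a2 ∧ (a2 = 4 ↔ a4 = 2) ∧ a4 ≠ a3 ∧ (a3 = 4 ↔ a4 = 3)) →
    ∀ a5 : Fin 10, (a5 ≠ 5 ∧ a5 ≠ (3 : Fin 10) ∧ ((3 : Fin 10) = 5 ↔ a5 = 0) ∧ a5 ≠ a1 ∧ (a1 = 5 ↔ a5 = 1) ∧ a5 ≠ a2 ∧ (a2 = 5 ↔ a5 = 2) ∧ a5 ≠ a3 ∧ (a3 = 5 ↔ a5 = 3) ∧ a5 ≠ a4 ∧ (a4 = 5 ↔ a5 = 4)) →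
    ∀ a6 : Fin 10, (a6 ≠ 6 ∧ a6 ≠ (3 : Fin 10) ∧ ((3 : Fin 10) = 6 ↔ a6 = 0) ∧ a6 ≠ a1 ∧ (a1 = 6 ↔ a6 = 1) ∧ a6 ≠ a2 ∧ (a2 = 6 ↔ a6 = 2) ∧ a6 ≠ a3 ∧ (a3 = 6 ↔ a6 = 3) ∧ a6 ≠ a4 ∧ (a4 = 6 ↔ a6 = 4) ∧ a6 ≠ a5 ∧ (a5 = 6 ↔ a6 = 5)) →
    ∀ a7 : Fin 10, (a7 ≠ 7 ∧ a7 ≠ (3 : Fin 10) ∧ ((3 : Fin 10) = 7 ↔ a7 = 0) ∧ a7 ≠ a1 ∧ (a1 = 7 ↔ a7 = 1) ∧ a7 ≠ a2 ∧ (a2 = 7 ↔ a7 = 2) ∧ a7 ≠ a3 ∧ (a3 = 7 ↔ a7 = 3) ∧ a7 ≠ a4 ∧ (a4 = 7 ↔ a7 = 4) ∧ a7 ≠ a5 ∧ (a5 = 7 ↔ a7 = 5) ∧ a7 ≠ a6 ∧ (a6 = 7 ↔ a7 = 6)) →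
    ∀ a8 : Fin 10, (a8 ≠ 8 ∧ a8 ≠ (3 : Fin 10) ∧ ((3 : Fin 10) = 8 ↔ a8 = 0) ∧ a8 ≠ a1 ∧ (a1 = 8 ↔ a8 = 1) ∧ a8 ≠ a2 ∧ (a2 = 8 ↔ a8 = 2) ∧ a8 ≠ a3 ∧ (a3 = 8 ↔ a8 = 3) ∧ a8 ≠ a4 ∧ (a4 = 8 ↔ a8 = 4) ∧ a8 ≠ a5 ∧ (a5 = 8 ↔ a8 = 5) ∧ a8 ≠ a6 ∧ (a6 = 8 ↔ a8 = 6) ∧ a8 ≠ a7 ∧ (a7 = 8 ↔ a8 = 7)) →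
    ∀ a9 : Fin 10, (a9 ≠ 9 ∧ a9 ≠ (3 : Fin 10) ∧ ((3 : Fin 10) = 9 ↔ a9 = 0) ∧ a9 ≠ a1 ∧ (a1 = 9 ↔ a9 = 1) ∧ a9 ≠ a2 ∧ (a2 = 9 ↔ a9 = 2) ∧ a9 ≠ a3 ∧ (a3 = 9 ↔ a9 = 3) ∧ a9 ≠ a4 ∧ (a4 = 9 ↔ a9 = 4) ∧ a9 ≠ a5 ∧ (a5 = 9 ↔ a9 = 5) ∧ a9 ≠ a6 ∧ (a6 = 9 ↔ a9 = 6) ∧ a9 ≠ a7 ∧ (a7 = 9 ↔ a9 = 7) ∧ a9 ≠ a8 ∧ (a8 = 9 ↔ a9 = 8)) →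
    PropP1 (mkCol [((3 : Fin 10) : ℕ), (a1 : ℕ), (a2 : ℕ), (a3 : ℕ), (a4 : ℕ), (a5 : ℕ), (a6 : ℕ), (a7 : ℕ), (a8 : ℕ), (a9 : ℕ)]) →
    ¬ ∃ v : Fin 5,
        (∃ x y : Fin 5, (v,x,y) ∈ cherryT (mkCol [((3 : Fin 10) : ℕ), (a1 : ℕ), (a2 : ℕ), (a3 : ℕ), (a4 : ℕ), (a5 : ℕ), (a6 : ℕ), (a7 : ℕ), (a8 : ℕ), (a9 : ℕ)])) ∧
        ((cherryT (mkCol [((3 : Fin 10) : ℕ), (a1 : ℕ), (a2 : ℕ), (a3 : ℕ), (a4 : ℕ), (a5 : ℕ), (a6 : ℕ), (a7 : ℕ), (a8 : ℕ), (a9 : ℕ)])).filter fun t => t.1 ≠ v ∧ t.2.1 ≠ v ∧ t.2.2 ≠ v).card = 1 := by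
  decide

set_option synthInstance.maxSize 100000 in
set_option synthInstance.maxHeartbeats 4000000 in
set_option maxRecDepth 100000 in
set_option maxHeartbeats 0 in
lemma core4 :
    ∀ a1 : Fin 10, (a1 ≠ 1 ∧ a1 ≠ (4 : Fin 10) ∧ ((4 : Fin 10) = 1 ↔ a1 = 0)) →
    ∀ a2 : Fin 10, (a2 ≠ 2 ∧ a2 ≠ (4 : Fin 10) ∧ ((4 : Fin 10) = 2 ↔ a2 = 0) ∧ a2 ≠ a1 ∧ (a1 = 2 ↔ a2 = 1)) →
    ∀ a3 : Fin 10, (a3 ≠ 3 ∧ a3 ≠ (4 : Fin 10) ∧ ((4 : Fin 10) = 3 ↔ a3 = 0) ∧ a3 ≠ a1 ∧ (a1 = 3 ↔ a3 = 1) ∧ a3 ≠ a2 ∧ (a2 = 3 ↔ a3 = 2)) →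
    ∀ a4 : Fin 10, (a4 ≠ 4 ∧ a4 ≠ (4 : Fin 10) ∧ ((4 : Fin 10) = 4 ↔ a4 = 0) ∧ a4 ≠ a1 ∧ (a1 = 4 ↔ a4 = 1) ∧ a4 ≠ a2 ∧ (a2 = 4 ↔ a4 = 2) ∧ a4 ≠ a3 ∧ (a3 = 4 ↔ a4 = 3)) →
    ∀ a5 : Fin 10, (a5 ≠ 5 ∧ a5 ≠ (4 : Fin 10) ∧ ((4 : Fin 10) = 5 ↔ a5 = 0) ∧ a5 ≠ a1 ∧ (a1 = 5 ↔ a5 = 1) ∧ a5 ≠ a2 ∧ (a2 = 5 ↔ a5 = 2) ∧ a5 ≠ a3 ∧ (a3 = 5 ↔ a5 = 3) ∧ a5 ≠ a4 ∧ (a4 = 5 ↔ a5 = 4)) →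
    ∀ a6 : Fin 10, (a6 ≠ 6 ∧ a6 ≠ (4 : Fin 10) ∧ ((4 : Fin 10) = 6 ↔ a6 = 0) ∧ a6 ≠ a1 ∧ (a1 = 6 ↔ a6 = 1) ∧ a6 ≠ a2 ∧ (a2 = 6 ↔ a6 = 2) ∧ a6 ≠ a3 ∧ (a3 = 6 ↔ a6 = 3) ∧ a6 ≠ a4 ∧ (a4 = 6 ↔ a6 = 4) ∧ a6 ≠ a5 ∧ (a5 = 6 ↔ a6 = 5)) →
    ∀ a7 : Fin 10, (a7 ≠ 7 ∧ a7 ≠ (4 : Fin 10) ∧ ((4 : Fin 10) = 7 ↔ a7 = 0) ∧ a7 ≠ a1 ∧ (a1 = 7 ↔ a7 = 1) ∧ a7 ≠ a2 ∧ (a2 = 7 ↔ a7 = 2) ∧ a7 ≠ a3 ∧ (a3 = 7 ↔ a7 = 3) ∧ a7 ≠ a4 ∧ (a4 = 7 ↔ a7 = 4) ∧ a7 ≠ a5 ∧ (a5 = 7 ↔ a7 = 5) ∧ a7 ≠ a6 ∧ (a6 = 7 ↔ a7 = 6)) →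
    ∀ a8 : Fin 10, (a8 ≠ 8 ∧ a8 ≠ (4 : Fin 10) ∧ ((4 : Fin 10) = 8 ↔ a8 = 0) ∧ a8 ≠ a1 ∧ (a1 = 8 ↔ a8 = 1) ∧ a8 ≠ a2 ∧ (a2 = 8 ↔ a8 = 2) ∧ a8 ≠ a3 ∧ (a3 = 8 ↔ a8 = 3) ∧ a8 ≠ a4 ∧ (a4 = 8 ↔ a8 = 4) ∧ a8 ≠ a5 ∧ (a5 = 8 ↔ a8 = 5) ∧ a8 ≠ a6 ∧ (a6 = 8 ↔ a8 = 6) ∧ a8 ≠ a7 ∧ (a7 = 8 ↔ a8 = 7)) →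
    ∀ a9 : Fin 10, (a9 ≠ 9 ∧ a9 ≠ (4 : Fin 10) ∧ ((4 : Fin 10) = 9 ↔ a9 = 0) ∧ a9 ≠ a1 ∧ (a1 = 9 ↔ a9 = 1) ∧ a9 ≠ a2 ∧ (a2 = 9 ↔ a9 = 2) ∧ a9 ≠ a3 ∧ (a3 = 9 ↔ a9 = 3) ∧ a9 ≠ a4 ∧ (a4 = 9 ↔ a9 = 4) ∧ a9 ≠ a5 ∧ (a5 = 9 ↔ a9 = 5) ∧ a9 ≠ a6 ∧ (a6 = 9 ↔ a9 = 6) ∧ a9 ≠ a7 ∧ (a7 = 9 ↔ a9 = 7) ∧ a9 ≠ a8 ∧ (a8 = 9 ↔ a9 = 8)) →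
    PropP1 (mkCol [((4 : Fin 10) : ℕ), (a1 : ℕ), (a2 : ℕ), (a3 : ℕ), (a4 : ℕ), (a5 : ℕ), (a6 : ℕ), (a7 : ℕ), (a8 : ℕ), (a9 : ℕ)]) →
    ¬ ∃ v : Fin 5,
        (∃ x y : Fin 5, (v,x,y) ∈ cherryT (mkCol [((4 : Fin 10) : ℕ), (a1 : ℕ), (a2 : ℕ), (a3 : ℕ), (a4 : ℕ), (a5 : ℕ), (a6 : ℕ), (a7 : ℕ), (a8 : ℕ), (a9 : ℕ)])) ∧
        ((cherryT (mkCol [((4 : Fin 10) : ℕ), (a1 : ℕ), (a2 : ℕ), (a3 : ℕ), (a4 : ℕ), (a5 : ℕ), (a6 : ℕ), (a7 : ℕ), (a8 : ℕ), (a9 : ℕ)])).filter fun t => t.1 ≠ v ∧ t.2.1 ≠ v ∧ t.2.2 ≠ v).card = 1 := by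
  decide

set_option synthInstance.maxSize 100000 in
set_option synthInstance.maxHeartbeats 4000000 in
set_option maxRecDepth 100000 in
set_option maxHeartbeats 0 in
lemma core5 :
    ∀ a1 : Fin 10, (a1 ≠ 1 ∧ a1 ≠ (5 : Fin 10) ∧ ((5 : Fin 10) = 1 ↔ a1 = 0)) →
    ∀ a2 : Fin 10, (a2 ≠ 2 ∧ a2 ≠ (5 : Fin 10) ∧ ((5 : Fin 10) = 2 ↔ a2 = 0) ∧ a2 ≠ a1 ∧ (a1 = 2 ↔ a2 = 1)) →
    ∀ a3 : Fin 10, (a3 ≠ 3 ∧ a3 ≠ (5 : Fin 10) ∧ ((5 : Fin 10) = 3 ↔ a3 = 0) ∧ a3 ≠ a1 ∧ (a1 = 3 ↔ a3 = 1) ∧ a3 ≠ a2 ∧ (a2 = 3 ↔ a3 = 2)) →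
    ∀ a4 : Fin 10, (a4 ≠ 4 ∧ a4 ≠ (5 : Fin 10) ∧ ((5 : Fin 10) = 4 ↔ a4 = 0) ∧ a4 ≠ a1 ∧ (a1 = 4 ↔ a4 = 1) ∧ a4 ≠ a2 ∧ (a2 = 4 ↔ a4 = 2) ∧ a4 ≠ a3 ∧ (a3 = 4 ↔ a4 = 3)) →
    ∀ a5 : Fin 10, (a5 ≠ 5 ∧ a5 ≠ (5 : Fin 10) ∧ ((5 : Fin 10) = 5 ↔ a5 = 0) ∧ a5 ≠ a1 ∧ (a1 = 5 ↔ a5 = 1) ∧ a5 ≠ a2 ∧ (a2 = 5 ↔ a5 = 2) ∧ a5 ≠ a3 ∧ (a3 = 5 ↔ a5 = 3) ∧ a5 ≠ a4 ∧ (a4 = 5 ↔ a5 = 4)) →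
    ∀ a6 : Fin 10, (a6 ≠ 6 ∧ a6 ≠ (5 : Fin 10) ∧ ((5 : Fin 10) = 6 ↔ a6 = 0) ∧ a6 ≠ a1 ∧ (a1 = 6 ↔ a6 = 1) ∧ a6 ≠ a2 ∧ (a2 = 6 ↔ a6 = 2) ∧ a6 ≠ a3 ∧ (a3 = 6 ↔ a6 = 3) ∧ a6 ≠ a4 ∧ (a4 = 6 ↔ a6 = 4) ∧ a6 ≠ a5 ∧ (a5 = 6 ↔ a6 = 5)) →
    ∀ a7 : Fin 10, (a7 ≠ 7 ∧ a7 ≠ (5 : Fin 10) ∧ ((5 : Fin 10) = 7 ↔ a7 = 0) ∧ a7 ≠ a1 ∧ (a1 = 7 ↔ a7 = 1) ∧ a7 ≠ a2 ∧ (a2 = 7 ↔ a7 = 2) ∧ a7 ≠ a3 ∧ (a3 = 7 ↔ a7 = 3) ∧ a7 ≠ a4 ∧ (a4 = 7 ↔ a7 = 4) ∧ a7 ≠ a5 ∧ (a5 = 7 ↔ a7 = 5) ∧ a7 ≠ a6 ∧ (a6 = 7 ↔ a7 = 6)) →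
    ∀ a8 : Fin 10, (a8 ≠ 8 ∧ a8 ≠ (5 : Fin 10) ∧ ((5 : Fin 10) = 8 ↔ a8 = 0) ∧ a8 ≠ a1 ∧ (a1 = 8 ↔ a8 = 1) ∧ a8 ≠ a2 ∧ (a2 = 8 ↔ a8 = 2) ∧ a8 ≠ a3 ∧ (a3 = 8 ↔ a8 = 3) ∧ a8 ≠ a4 ∧ (a4 = 8 ↔ a8 = 4) ∧ a8 ≠ a5 ∧ (a5 = 8 ↔ a8 = 5) ∧ a8 ≠ a6 ∧ (a6 = 8 ↔ a8 = 6) ∧ a8 ≠ a7 ∧ (a7 = 8 ↔ a8 = 7)) →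
    ∀ a9 : Fin 10, (a9 ≠ 9 ∧ a9 ≠ (5 : Fin 10) ∧ ((5 : Fin 10) = 9 ↔ a9 = 0) ∧ a9 ≠ a1 ∧ (a1 = 9 ↔ a9 = 1) ∧ a9 ≠ a2 ∧ (a2 = 9 ↔ a9 = 2) ∧ a9 ≠ a3 ∧ (a3 = 9 ↔ a9 = 3) ∧ a9 ≠ a4 ∧ (a4 = 9 ↔ a9 = 4) ∧ a9 ≠ a5 ∧ (a5 = 9 ↔ a9 = 5) ∧ a9 ≠ a6 ∧ (a6 = 9 ↔ a9 = 6) ∧ a9 ≠ a7 ∧ (a7 = 9 ↔ a9 = 7) ∧ a9 ≠ a8 ∧ (a8 = 9 ↔ a9 = 8)) →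
    PropP1 (mkCol [((5 : Fin 10) : ℕ), (a1 : ℕ), (a2 : ℕ), (a3 : ℕ), (a4 : ℕ), (a5 : ℕ), (a6 : ℕ), (a7 : ℕ), (a8 : ℕ), (a9 : ℕ)]) →
    ¬ ∃ v : Fin 5,
        (∃ x y : Fin 5, (v,x,y) ∈ cherryT (mkCol [((5 : Fin 10) : ℕ), (a1 : ℕ), (a2 : ℕ), (a3 : ℕ), (a4 : ℕ), (a5 : ℕ), (a6 : ℕ), (a7 : ℕ), (a8 : ℕ), (a9 : ℕ)])) ∧
        ((cherryT (mkCol [((5 : Fin 10) : ℕ), (a1 : ℕ), (a2 : ℕ), (a3 : ℕ), (a4 : ℕ), (a5 : ℕ), (a6 : ℕ), (a7 : ℕ), (a8 : ℕ), (a9 : ℕ)])).filter fun t => t.1 ≠ v ∧ t.2.1 ≠ v ∧ t.2.2 ≠ v).card = 1 := by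
  decide

set_option synthInstance.maxSize 100000 in
set_option synthInstance.maxHeartbeats 4000000 in
set_option maxRecDepth 100000 in
set_option maxHeartbeats 0 in
lemma core6 :
    ∀ a1 : Fin 10, (a1 ≠ 1 ∧ a1 ≠ (6 : Fin 10) ∧ ((6 : Fin 10) = 1 ↔ a1 = 0)) →
    ∀ a2 : Fin 10, (a2 ≠ 2 ∧ a2 ≠ (6 : Fin 10) ∧ ((6 : Fin 10) = 2 ↔ a2 = 0) ∧ a2 ≠ a1 ∧ (a1 = 2 ↔ a2 = 1)) →
    ∀ a3 : Fin 10, (a3 ≠ 3 ∧ a3 ≠ (6 : Fin 10) ∧ ((6 : Fin 10) = 3 ↔ a3 = 0) ∧ a3 ≠ a1 ∧ (a1 = 3 ↔ a3 = 1) ∧ a3 ≠ a2 ∧ (a2 = 3 ↔ a3 = 2)) →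
    ∀ a4 : Fin 10, (a4 ≠ 4 ∧ a4 ≠ (6 : Fin 10) ∧ ((6 : Fin 10) = 4 ↔ a4 = 0) ∧ a4 ≠ a1 ∧ (a1 = 4 ↔ a4 = 1) ∧ a4 ≠ a2 ∧ (a2 = 4 ↔ a4 = 2) ∧ a4 ≠ a3 ∧ (a3 = 4 ↔ a4 = 3)) →
    ∀ a5 : Fin 10, (a5 ≠ 5 ∧ a5 ≠ (6 : Fin 10) ∧ ((6 : Fin 10) = 5 ↔ a5 = 0) ∧ a5 ≠ a1 ∧ (a1 = 5 ↔ a5 = 1) ∧ a5 ≠ a2 ∧ (a2 = 5 ↔ a5 = 2) ∧ a5 ≠ a3 ∧ (a3 = 5 ↔ a5 = 3) ∧ a5 ≠ a4 ∧ (a4 = 5 ↔ a5 = 4)) →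
    ∀ a6 : Fin 10, (a6 ≠ 6 ∧ a6 ≠ (6 : Fin 10) ∧ ((6 : Fin 10) = 6 ↔ a6 = 0) ∧ a6 ≠ a1 ∧ (a1 = 6 ↔ a6 = 1) ∧ a6 ≠ a2 ∧ (a2 = 6 ↔ a6 = 2) ∧ a6 ≠ a3 ∧ (a3 = 6 ↔ a6 = 3) ∧ a6 ≠ a4 ∧ (a4 = 6 ↔ a6 = 4) ∧ a6 ≠ a5 ∧ (a5 = 6 ↔ a6 = 5)) →
    ∀ a7 : Fin 10, (a7 ≠ 7 ∧ a7 ≠ (6 : Fin 10) ∧ ((6 : Fin 10) = 7 ↔ a7 = 0) ∧ a7 ≠ a1 ∧ (a1 = 7 ↔ a7 = 1) ∧ a7 ≠ a2 ∧ (a2 = 7 ↔ a7 = 2) ∧ a7 ≠ a3 ∧ (a3 = 7 ↔ a7 = 3) ∧ a7 ≠ a4 ∧ (a4 = 7 ↔ a7 = 4) ∧ a7 ≠ a5 ∧ (a5 = 7 ↔ a7 = 5) ∧ a7 ≠ a6 ∧ (a6 = 7 ↔ a7 = 6)) →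
    ∀ a8 : Fin 10, (a8 ≠ 8 ∧ a8 ≠ (6 : Fin 10) ∧ ((6 : Fin 10) = 8 ↔ a8 = 0) ∧ a8 ≠ a1 ∧ (a1 = 8 ↔ a8 = 1) ∧ a8 ≠ a2 ∧ (a2 = 8 ↔ a8 = 2) ∧ a8 ≠ a3 ∧ (a3 = 8 ↔ a8 = 3) ∧ a8 ≠ a4 ∧ (a4 = 8 ↔ a8 = 4) ∧ a8 ≠ a5 ∧ (a5 = 8 ↔ a8 = 5) ∧ a8 ≠ a6 ∧ (a6 = 8 ↔ a8 = 6) ∧ a8 ≠ a7 ∧ (a7 = 8 ↔ a8 = 7)) →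
    ∀ a9 : Fin 10, (a9 ≠ 9 ∧ a9 ≠ (6 : Fin 10) ∧ ((6 : Fin 10) = 9 ↔ a9 = 0) ∧ a9 ≠ a1 ∧ (a1 = 9 ↔ a9 = 1) ∧ a9 ≠ a2 ∧ (a2 = 9 ↔ a9 = 2) ∧ a9 ≠ a3 ∧ (a3 = 9 ↔ a9 = 3) ∧ a9 ≠ a4 ∧ (a4 = 9 ↔ a9 = 4) ∧ a9 ≠ a5 ∧ (a5 = 9 ↔ a9 = 5) ∧ a9 ≠ a6 ∧ (a6 = 9 ↔ a9 = 6) ∧ a9 ≠ a7 ∧ (a7 = 9 ↔ a9 = 7) ∧ a9 ≠ a8 ∧ (a8 = 9 ↔ a9 = 8)) →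
    PropP1 (mkCol [((6 : Fin 10) : ℕ), (a1 : ℕ), (a2 : ℕ), (a3 : ℕ), (a4 : ℕ), (a5 : ℕ), (a6 : ℕ), (a7 : ℕ), (a8 : ℕ), (a9 : ℕ)]) →
    ¬ ∃ v : Fin 5,
        (∃ x y : Fin 5, (v,x,y) ∈ cherryT (mkCol [((6 : Fin 10) : ℕ), (a1 : ℕ), (a2 : ℕ), (a3 : ℕ), (a4 : ℕ), (a5 : ℕ), (a6 : ℕ), (a7 : ℕ), (a8 : ℕ), (a9 : ℕ)])) ∧
        ((cherryT (mkCol [((6 : Fin 10) : ℕ), (a1 : ℕ), (a2 : ℕ), (a3 : ℕ), (a4 : ℕ), (a5 : ℕ), (a6 : ℕ), (a7 : ℕ), (a8 : ℕ), (a9 : ℕ)])).filter fun t => t.1 ≠ v ∧ t.2.1 ≠ v ∧ t.2.2 ≠ v).card = 1 := by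
  decide

set_option synthInstance.maxSize 100000 in
set_option synthInstance.maxHeartbeats 4000000 in
set_option maxRecDepth 100000 in
set_option maxHeartbeats 0 in
lemma core7 :
    ∀ a1 : Fin 10, (a1 ≠ 1 ∧ a1 ≠ (7 : Fin 10) ∧ ((7 : Fin 10) = 1 ↔ a1 = 0)) →
    ∀ a2 : Fin 10, (a2 ≠ 2 ∧ a2 ≠ (7 : Fin 10) ∧ ((7 : Fin 10) = 2 ↔ a2 = 0) ∧ a2 ≠ a1 ∧ (a1 = 2 ↔ a2 = 1)) →
    ∀ a3 : Fin 10, (a3 ≠ 3 ∧ a3 ≠ (7 : Fin 10) ∧ ((7 : Fin 10) = 3 ↔ a3 = 0) ∧ a3 ≠ a1 ∧ (a1 = 3 ↔ a3 = 1) ∧ a3 ≠ a2 ∧ (a2 = 3 ↔ a3 = 2)) →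
    ∀ a4 : Fin 10, (a4 ≠ 4 ∧ a4 ≠ (7 : Fin 10) ∧ ((7 : Fin 10) = 4 ↔ a4 = 0) ∧ a4 ≠ a1 ∧ (a1 = 4 ↔ a4 = 1) ∧ a4 ≠ a2 ∧ (a2 = 4 ↔ a4 = 2) ∧ a4 ≠ a3 ∧ (a3 = 4 ↔ a4 = 3)) →
    ∀ a5 : Fin 10, (a5 ≠ 5 ∧ a5 ≠ (7 : Fin 10) ∧ ((7 : Fin 10) = 5 ↔ a5 = 0) ∧ a5 ≠ a1 ∧ (a1 = 5 ↔ a5 = 1) ∧ a5 ≠ a2 ∧ (a2 = 5 ↔ a5 = 2) ∧ a5 ≠ a3 ∧ (a3 = 5 ↔ a5 = 3) ∧ a5 ≠ a4 ∧ (a4 = 5 ↔ a5 = 4)) →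
    ∀ a6 : Fin 10, (a6 ≠ 6 ∧ a6 ≠ (7 : Fin 10) ∧ ((7 : Fin 10) = 6 ↔ a6 = 0) ∧ a6 ≠ a1 ∧ (a1 = 6 ↔ a6 = 1) ∧ a6 ≠ a2 ∧ (a2 = 6 ↔ a6 = 2) ∧ a6 ≠ a3 ∧ (a3 = 6 ↔ a6 = 3) ∧ a6 ≠ a4 ∧ (a4 = 6 ↔ a6 = 4) ∧ a6 ≠ a5 ∧ (a5 = 6 ↔ a6 = 5)) →
    ∀ a7 : Fin 10, (a7 ≠ 7 ∧ a7 ≠ (7 : Fin 10) ∧ ((7 : Fin 10) = 7 ↔ a7 = 0) ∧ a7 ≠ a1 ∧ (a1 = 7 ↔ a7 = 1) ∧ a7 ≠ a2 ∧ (a2 = 7 ↔ a7 = 2) ∧ a7 ≠ a3 ∧ (a3 = 7 ↔ a7 = 3) ∧ a7 ≠ a4 ∧ (a4 = 7 ↔ a7 = 4) ∧ a7 ≠ a5 ∧ (a5 = 7 ↔ a7 = 5) ∧ a7 ≠ a6 ∧ (a6 = 7 ↔ a7 = 6)) →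
    ∀ a8 : Fin 10, (a8 ≠ 8 ∧ a8 ≠ (7 : Fin 10) ∧ ((7 : Fin 10) = 8 ↔ a8 = 0) ∧ a8 ≠ a1 ∧ (a1 = 8 ↔ a8 = 1) ∧ a8 ≠ a2 ∧ (a2 = 8 ↔ a8 = 2) ∧ a8 ≠ a3 ∧ (a3 = 8 ↔ a8 = 3) ∧ a8 ≠ a4 ∧ (a4 = 8 ↔ a8 = 4) ∧ a8 ≠ a5 ∧ (a5 = 8 ↔ a8 = 5) ∧ a8 ≠ a6 ∧ (a6 = 8 ↔ a8 = 6) ∧ a8 ≠ a7 ∧ (a7 = 8 ↔ a8 = 7)) →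
    ∀ a9 : Fin 10, (a9 ≠ 9 ∧ a9 ≠ (7 : Fin 10) ∧ ((7 : Fin 10) = 9 ↔ a9 = 0) ∧ a9 ≠ a1 ∧ (a1 = 9 ↔ a9 = 1) ∧ a9 ≠ a2 ∧ (a2 = 9 ↔ a9 = 2) ∧ a9 ≠ a3 ∧ (a3 = 9 ↔ a9 = 3) ∧ a9 ≠ a4 ∧ (a4 = 9 ↔ a9 = 4) ∧ a9 ≠ a5 ∧ (a5 = 9 ↔ a9 = 5) ∧ a9 ≠ a6 ∧ (a6 = 9 ↔ a9 = 6) ∧ a9 ≠ a7 ∧ (a7 = 9 ↔ a9 = 7) ∧ a9 ≠ a8 ∧ (a8 = 9 ↔ a9 = 8)) →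
    PropP1 (mkCol [((7 : Fin 10) : ℕ), (a1 : ℕ), (a2 : ℕ), (a3 : ℕ), (a4 : ℕ), (a5 : ℕ), (a6 : ℕ), (a7 : ℕ), (a8 : ℕ), (a9 : ℕ)]) →
    ¬ ∃ v : Fin 5,
        (∃ x y : Fin 5, (v,x,y) ∈ cherryT (mkCol [((7 : Fin 10) : ℕ), (a1 : ℕ), (a2 : ℕ), (a3 : ℕ), (a4 : ℕ), (a5 : ℕ), (a6 : ℕ), (a7 : ℕ), (a8 : ℕ), (a9 : ℕ)])) ∧
        ((cherryT (mkCol [((7 : Fin 10) : ℕ), (a1 : ℕ), (a2 : ℕ), (a3 : ℕ), (a4 : ℕ), (a5 : ℕ), (a6 : ℕ), (a7 : ℕ), (a8 : ℕ), (a9 : ℕ)])).filter fun t => t.1 ≠ v ∧ t.2.1 ≠ v ∧ t.2.2 ≠ v).card = 1 := by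
  decide

set_option synthInstance.maxSize 100000 in
set_option synthInstance.maxHeartbeats 4000000 in
set_option maxRecDepth 100000 in
set_option maxHeartbeats 0 in
lemma core8 :
    ∀ a1 : Fin 10, (a1 ≠ 1 ∧ a1 ≠ (8 : Fin 10) ∧ ((8 : Fin 10) = 1 ↔ a1 = 0)) →
    ∀ a2 : Fin 10, (a2 ≠ 2 ∧ a2 ≠ (8 : Fin 10) ∧ ((8 : Fin 10) = 2 ↔ a2 = 0) ∧ a2 ≠ a1 ∧ (a1 = 2 ↔ a2 = 1)) →
    ∀ a3 : Fin 10, (a3 ≠ 3 ∧ a3 ≠ (8 : Fin 10) ∧ ((8 : Fin 10) = 3 ↔ a3 = 0) ∧ a3 ≠ a1 ∧ (a1 = 3 ↔ a3 = 1) ∧ a3 ≠ a2 ∧ (a2 = 3 ↔ a3 = 2)) →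
    ∀ a4 : Fin 10, (a4 ≠ 4 ∧ a4 ≠ (8 : Fin 10) ∧ ((8 : Fin 10) = 4 ↔ a4 = 0) ∧ a4 ≠ a1 ∧ (a1 = 4 ↔ a4 = 1) ∧ a4 ≠ a2 ∧ (a2 = 4 ↔ a4 = 2) ∧ a4 ≠ a3 ∧ (a3 = 4 ↔ a4 = 3)) →
    ∀ a5 : Fin 10, (a5 ≠ 5 ∧ a5 ≠ (8 : Fin 10) ∧ ((8 : Fin 10) = 5 ↔ a5 = 0) ∧ a5 ≠ a1 ∧ (a1 = 5 ↔ a5 = 1) ∧ a5 ≠ a2 ∧ (a2 = 5 ↔ a5 = 2) ∧ a5 ≠ a3 ∧ (a3 = 5 ↔ a5 = 3) ∧ a5 ≠ a4 ∧ (a4 = 5 ↔ a5 = 4)) →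
    ∀ a6 : Fin 10, (a6 ≠ 6 ∧ a6 ≠ (8 : Fin 10) ∧ ((8 : Fin 10) = 6 ↔ a6 = 0) ∧ a6 ≠ a1 ∧ (a1 = 6 ↔ a6 = 1) ∧ a6 ≠ a2 ∧ (a2 = 6 ↔ a6 = 2) ∧ a6 ≠ a3 ∧ (a3 = 6 ↔ a6 = 3) ∧ a6 ≠ a4 ∧ (a4 = 6 ↔ a6 = 4) ∧ a6 ≠ a5 ∧ (a5 = 6 ↔ a6 = 5)) →
    ∀ a7 : Fin 10, (a7 ≠ 7 ∧ a7 ≠ (8 : Fin 10) ∧ ((8 : Fin 10) = 7 ↔ a7 = 0) ∧ a7 ≠ a1 ∧ (a1 = 7 ↔ a7 = 1) ∧ a7 ≠ a2 ∧ (a2 = 7 ↔ a7 = 2) ∧ a7 ≠ a3 ∧ (a3 = 7 ↔ a7 = 3) ∧ a7 ≠ a4 ∧ (a4 = 7 ↔ a7 = 4) ∧ a7 ≠ a5 ∧ (a5 = 7 ↔ a7 = 5) ∧ a7 ≠ a6 ∧ (a6 = 7 ↔ a7 = 6)) →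
    ∀ a8 : Fin 10, (a8 ≠ 8 ∧ a8 ≠ (8 : Fin 10) ∧ ((8 : Fin 10) = 8 ↔ a8 = 0) ∧ a8 ≠ a1 ∧ (a1 = 8 ↔ a8 = 1) ∧ a8 ≠ a2 ∧ (a2 = 8 ↔ a8 = 2) ∧ a8 ≠ a3 ∧ (a3 = 8 ↔ a8 = 3) ∧ a8 ≠ a4 ∧ (a4 = 8 ↔ a8 = 4) ∧ a8 ≠ a5 ∧ (a5 = 8 ↔ a8 = 5) ∧ a8 ≠ a6 ∧ (a6 = 8 ↔ a8 = 6) ∧ a8 ≠ a7 ∧ (a7 = 8 ↔ a8 = 7)) →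
    ∀ a9 : Fin 10, (a9 ≠ 9 ∧ a9 ≠ (8 : Fin 10) ∧ ((8 : Fin 10) = 9 ↔ a9 = 0) ∧ a9 ≠ a1 ∧ (a1 = 9 ↔ a9 = 1) ∧ a9 ≠ a2 ∧ (a2 = 9 ↔ a9 = 2) ∧ a9 ≠ a3 ∧ (a3 = 9 ↔ a9 = 3) ∧ a9 ≠ a4 ∧ (a4 = 9 ↔ a9 = 4) ∧ a9 ≠ a5 ∧ (a5 = 9 ↔ a9 = 5) ∧ a9 ≠ a6 ∧ (a6 = 9 ↔ a9 = 6) ∧ a9 ≠ a7 ∧ (a7 = 9 ↔ a9 = 7) ∧ a9 ≠ a8 ∧ (a8 = 9 ↔ a9 = 8)) →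
    PropP1 (mkCol [((8 : Fin 10) : ℕ), (a1 : ℕ), (a2 : ℕ), (a3 : ℕ), (a4 : ℕ), (a5 : ℕ), (a6 : ℕ), (a7 : ℕ), (a8 : ℕ), (a9 : ℕ)]) →
    ¬ ∃ v : Fin 5,
        (∃ x y : Fin 5, (v,x,y) ∈ cherryT (mkCol [((8 : Fin 10) : ℕ), (a1 : ℕ), (a2 : ℕ), (a3 : ℕ), (a4 : ℕ), (a5 : ℕ), (a6 : ℕ), (a7 : ℕ), (a8 : ℕ), (a9 : ℕ)])) ∧
        ((cherryT (mkCol [((8 : Fin 10) : ℕ), (a1 : ℕ), (a2 : ℕ), (a3 : ℕ), (a4 : ℕ), (a5 : ℕ), (a6 : ℕ), (a7 : ℕ), (a8 : ℕ), (a9 : ℕ)])).filter fun t => t.1 ≠ v ∧ t.2.1 ≠ v ∧ t.2.2 ≠ v).card = 1 := by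
  decide

set_option synthInstance.maxSize 100000 in
set_option synthInstance.maxHeartbeats 4000000 in
set_option maxRecDepth 100000 in
set_option maxHeartbeats 0 in
lemma core9 :
    ∀ a1 : Fin 10, (a1 ≠ 1 ∧ a1 ≠ (9 : Fin 10) ∧ ((9 : Fin 10) = 1 ↔ a1 = 0)) →
    ∀ a2 : Fin 10, (a2 ≠ 2 ∧ a2 ≠ (9 : Fin 10) ∧ ((9 : Fin 10) = 2 ↔ a2 = 0) ∧ a2 ≠ a1 ∧ (a1 = 2 ↔ a2 = 1)) →
    ∀ a3 : Fin 10, (a3 ≠ 3 ∧ a3 ≠ (9 : Fin 10) ∧ ((9 : Fin 10) = 3 ↔ a3 = 0) ∧ a3 ≠ a1 ∧ (a1 = 3 ↔ a3 = 1) ∧ a3 ≠ a2 ∧ (a2 = 3 ↔ a3 = 2)) →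
    ∀ a4 : Fin 10, (a4 ≠ 4 ∧ a4 ≠ (9 : Fin 10) ∧ ((9 : Fin 10) = 4 ↔ a4 = 0) ∧ a4 ≠ a1 ∧ (a1 = 4 ↔ a4 = 1) ∧ a4 ≠ a2 ∧ (a2 = 4 ↔ a4 = 2) ∧ a4 ≠ a3 ∧ (a3 = 4 ↔ a4 = 3)) →
    ∀ a5 : Fin 10, (a5 ≠ 5 ∧ a5 ≠ (9 : Fin 10) ∧ ((9 : Fin 10) = 5 ↔ a5 = 0) ∧ a5 ≠ a1 ∧ (a1 = 5 ↔ a5 = 1) ∧ a5 ≠ a2 ∧ (a2 = 5 ↔ a5 = 2) ∧ a5 ≠ a3 ∧ (a3 = 5 ↔ a5 = 3) ∧ a5 ≠ a4 ∧ (a4 = 5 ↔ a5 = 4)) →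
    ∀ a6 : Fin 10, (a6 ≠ 6 ∧ a6 ≠ (9 : Fin 10) ∧ ((9 : Fin 10) = 6 ↔ a6 = 0) ∧ a6 ≠ a1 ∧ (a1 = 6 ↔ a6 = 1) ∧ a6 ≠ a2 ∧ (a2 = 6 ↔ a6 = 2) ∧ a6 ≠ a3 ∧ (a3 = 6 ↔ a6 = 3) ∧ a6 ≠ a4 ∧ (a4 = 6 ↔ a6 = 4) ∧ a6 ≠ a5 ∧ (a5 = 6 ↔ a6 = 5)) →
    ∀ a7 : Fin 10, (a7 ≠ 7 ∧ a7 ≠ (9 : Fin 10) ∧ ((9 : Fin 10) = 7 ↔ a7 = 0) ∧ a7 ≠ a1 ∧ (a1 = 7 ↔ a7 = 1) ∧ a7 ≠ a2 ∧ (a2 = 7 ↔ a7 = 2) ∧ a7 ≠ a3 ∧ (a3 = 7 ↔ a7 = 3) ∧ a7 ≠ a4 ∧ (a4 = 7 ↔ a7 = 4) ∧ a7 ≠ a5 ∧ (a5 = 7 ↔ a7 = 5) ∧ a7 ≠ a6 ∧ (a6 = 7 ↔ a7 = 6)) →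
    ∀ a8 : Fin 10, (a8 ≠ 8 ∧ a8 ≠ (9 : Fin 10) ∧ ((9 : Fin 10) = 8 ↔ a8 = 0) ∧ a8 ≠ a1 ∧ (a1 = 8 ↔ a8 = 1) ∧ a8 ≠ a2 ∧ (a2 = 8 ↔ a8 = 2) ∧ a8 ≠ a3 ∧ (a3 = 8 ↔ a8 = 3) ∧ a8 ≠ a4 ∧ (a4 = 8 ↔ a8 = 4) ∧ a8 ≠ a5 ∧ (a5 = 8 ↔ a8 = 5) ∧ a8 ≠ a6 ∧ (a6 = 8 ↔ a8 = 6) ∧ a8 ≠ a7 ∧ (a7 = 8 ↔ a8 = 7)) →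
    ∀ a9 : Fin 10, (a9 ≠ 9 ∧ a9 ≠ (9 : Fin 10) ∧ ((9 : Fin 10) = 9 ↔ a9 = 0) ∧ a9 ≠ a1 ∧ (a1 = 9 ↔ a9 = 1) ∧ a9 ≠ a2 ∧ (a2 = 9 ↔ a9 = 2) ∧ a9 ≠ a3 ∧ (a3 = 9 ↔ a9 = 3) ∧ a9 ≠ a4 ∧ (a4 = 9 ↔ a9 = 4) ∧ a9 ≠ a5 ∧ (a5 = 9 ↔ a9 = 5) ∧ a9 ≠ a6 ∧ (a6 = 9 ↔ a9 = 6) ∧ a9 ≠ a7 ∧ (a7 = 9 ↔ a9 = 7) ∧ a9 ≠ a8 ∧ (a8 = 9 ↔ a9 = 8)) →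
    PropP1 (mkCol [((9 : Fin 10) : ℕ), (a1 : ℕ), (a2 : ℕ), (a3 : ℕ), (a4 : ℕ), (a5 : ℕ), (a6 : ℕ), (a7 : ℕ), (a8 : ℕ), (a9 : ℕ)]) →
    ¬ ∃ v : Fin 5,
        (∃ x y : Fin 5, (v,x,y) ∈ cherryT (mkCol [((9 : Fin 10) : ℕ), (a1 : ℕ), (a2 : ℕ), (a3 : ℕ), (a4 : ℕ), (a5 : ℕ), (a6 : ℕ), (a7 : ℕ), (a8 : ℕ), (a9 : ℕ)])) ∧
        ((cherryT (mkCol [((9 : Fin 10) : ℕ), (a1 : ℕ), (a2 : ℕ), (a3 : ℕ), (a4 : ℕ), (a5 : ℕ), (a6 : ℕ), (a7 : ℕ), (a8 : ℕ), (a9 : ℕ)])).filter fun t => t.1 ≠ v ∧ t.2.1 ≠ v ∧ t.2.2 ≠ v).card = 1 := by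
  decide

set_option maxRecDepth 100000 in
set_option maxHeartbeats 0 in
lemma core :
    ∀ a0 : Fin 10, (a0 ≠ 0) →
    ∀ a1 : Fin 10, (a1 ≠ 1 ∧ a1 ≠ a0 ∧ (a0 = 1 ↔ a1 = 0)) →
    ∀ a2 : Fin 10, (a2 ≠ 2 ∧ a2 ≠ a0 ∧ (a0 = 2 ↔ a2 = 0) ∧ a2 ≠ a1 ∧ (a1 = 2 ↔ a2 = 1)) →
    ∀ a3 : Fin 10, (a3 ≠ 3 ∧ a3 ≠ a0 ∧ (a0 = 3 ↔ a3 = 0) ∧ a3 ≠ a1 ∧ (a1 = 3 ↔ a3 = 1) ∧ a3 ≠ a2 ∧ (a2 = 3 ↔ a3 = 2)) →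
    ∀ a4 : Fin 10, (a4 ≠ 4 ∧ a4 ≠ a0 ∧ (a0 = 4 ↔ a4 = 0) ∧ a4 ≠ a1 ∧ (a1 = 4 ↔ a4 = 1) ∧ a4 ≠ a2 ∧ (a2 = 4 ↔ a4 = 2) ∧ a4 ≠ a3 ∧ (a3 = 4 ↔ a4 = 3)) →
    ∀ a5 : Fin 10, (a5 ≠ 5 ∧ a5 ≠ a0 ∧ (a0 = 5 ↔ a5 = 0) ∧ a5 ≠ a1 ∧ (a1 = 5 ↔ a5 = 1) ∧ a5 ≠ a2 ∧ (a2 = 5 ↔ a5 = 2) ∧ a5 ≠ a3 ∧ (a3 = 5 ↔ a5 = 3) ∧ a5 ≠ a4 ∧ (a4 = 5 ↔ a5 = 4)) →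
    ∀ a6 : Fin 10, (a6 ≠ 6 ∧ a6 ≠ a0 ∧ (a0 = 6 ↔ a6 = 0) ∧ a6 ≠ a1 ∧ (a1 = 6 ↔ a6 = 1) ∧ a6 ≠ a2 ∧ (a2 = 6 ↔ a6 = 2) ∧ a6 ≠ a3 ∧ (a3 = 6 ↔ a6 = 3) ∧ a6 ≠ a4 ∧ (a4 = 6 ↔ a6 = 4) ∧ a6 ≠ a5 ∧ (a5 = 6 ↔ a6 = 5)) →
    ∀ a7 : Fin 10, (a7 ≠ 7 ∧ a7 ≠ a0 ∧ (a0 = 7 ↔ a7 = 0) ∧ a7 ≠ a1 ∧ (a1 = 7 ↔ a7 = 1) ∧ a7 ≠ a2 ∧ (a2 = 7 ↔ a7 = 2) ∧ a7 ≠ a3 ∧ (a3 = 7 ↔ a7 = 3) ∧ a7 ≠ a4 ∧ (a4 = 7 ↔ a7 = 4) ∧ a7 ≠ a5 ∧ (a5 = 7 ↔ a7 = 5) ∧ a7 ≠ a6 ∧ (a6 = 7 ↔ a7 = 6)) →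
    ∀ a8 : Fin 10, (a8 ≠ 8 ∧ a8 ≠ a0 ∧ (a0 = 8 ↔ a8 = 0) ∧ a8 ≠ a1 ∧ (a1 = 8 ↔ a8 = 1) ∧ a8 ≠ a2 ∧ (a2 = 8 ↔ a8 = 2) ∧ a8 ≠ a3 ∧ (a3 = 8 ↔ a8 = 3) ∧ a8 ≠ a4 ∧ (a4 = 8 ↔ a8 = 4) ∧ a8 ≠ a5 ∧ (a5 = 8 ↔ a8 = 5) ∧ a8 ≠ a6 ∧ (a6 = 8 ↔ a8 = 6) ∧ a8 ≠ a7 ∧ (a7 = 8 ↔ a8 = 7)) →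
    ∀ a9 : Fin 10, (a9 ≠ 9 ∧ a9 ≠ a0 ∧ (a0 = 9 ↔ a9 = 0) ∧ a9 ≠ a1 ∧ (a1 = 9 ↔ a9 = 1) ∧ a9 ≠ a2 ∧ (a2 = 9 ↔ a9 = 2) ∧ a9 ≠ a3 ∧ (a3 = 9 ↔ a9 = 3) ∧ a9 ≠ a4 ∧ (a4 = 9 ↔ a9 = 4) ∧ a9 ≠ a5 ∧ (a5 = 9 ↔ a9 = 5) ∧ a9 ≠ a6 ∧ (a6 = 9 ↔ a9 = 6) ∧ a9 ≠ a7 ∧ (a7 = 9 ↔ a9 = 7) ∧ a9 ≠ a8 ∧ (a8 = 9 ↔ a9 = 8)) →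
    PropP1 (mkCol [(a0 : ℕ), (a1 : ℕ), (a2 : ℕ), (a3 : ℕ), (a4 : ℕ), (a5 : ℕ), (a6 : ℕ), (a7 : ℕ), (a8 : ℕ), (a9 : ℕ)]) →
    ¬ ∃ v : Fin 5,
        (∃ x y : Fin 5, (v,x,y) ∈ cherryT (mkCol [(a0 : ℕ), (a1 : ℕ), (a2 : ℕ), (a3 : ℕ), (a4 : ℕ), (a5 : ℕ), (a6 : ℕ), (a7 : ℕ), (a8 : ℕ), (a9 : ℕ)])) ∧
        ((cherryT (mkCol [(a0 : ℕ), (a1 : ℕ), (a2 : ℕ), (a3 : ℕ), (a4 : ℕ), (a5 : ℕ), (a6 : ℕ), (a7 : ℕ), (a8 : ℕ), (a9 : ℕ)])).filter fun t => t.1 ≠ v ∧ t.2.1 ≠ v ∧ t.2.2 ≠ v).card = 1 := by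
  intro a0
  fin_cases a0
  · intro h; exact absurd rfl h
  · intro _; exact core1
  · intro _; exact core2
  · intro _; exact core3
  · intro _; exact core4
  · intro _; exact core5
  · intro _; exact core6
  · intro _; exact core7
  · intro _; exact core8
  · intro _; exact core9



/-- Claim 4.1: in a coloring of `K₅` of color type `(2,2,2,2,2)` satisfying (P1'),
no vertex `v` is both the center of a monochromatic cherry and such that the induced
coloring on the remaining four vertices contains exactly one monochromatic cherry. -/
theorem no_special_vertex_s1 {C : Type*} [DecidableEq C]
    (χ : Sym2 (Fin 5) → C) (htype : ColorType22222 χ) (hP1 : PropP1 χ) :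
    ¬ ∃ v : Fin 5,
        (∃ l : Finset (Fin 5), (v, l) ∈ cherries χ) ∧
        ((cherries χ).filter fun p => p.1 ≠ v ∧ v ∉ p.2).card = 1 := by
  classical
  rintro ⟨v, hv1, hv2⟩
  -- construct the partner function
  have hch : ∀ e : Sym2 (Fin 5), ∃ f : Sym2 (Fin 5), ¬e.IsDiag →
      ¬f.IsDiag ∧ f ≠ e ∧ χ f = χ e ∧ (∀ g, ¬g.IsDiag → χ g = χ e → g = e ∨ g = f) := by
    intro e
    by_cases he : e.IsDiag
    · exact ⟨e, fun h => absurd he h⟩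
    · have heF : e ∈ Finset.univ.filter (fun g : Sym2 (Fin 5) => ¬g.IsDiag ∧ χ g = χ e) := by
        simp [he]
      rcases htype (χ e) with h0 | h2
      · rw [Finset.card_eq_zero] at h0
        rw [h0] at heF
        exact absurd heF (Finset.notMem_empty e)
      · obtain ⟨a, b, hab, hFab⟩ := Finset.card_eq_two.mp h2
        have hmem : ∀ g : Sym2 (Fin 5), (¬g.IsDiag ∧ χ g = χ e) ↔ (g = a ∨ g = b) := by
          intro g
          constructor
          · intro hg
            have : g ∈ Finset.univ.filter (fun g : Sym2 (Fin 5) => ¬g.IsDiag ∧ χ g = χ e) := by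
              simp [hg.1, hg.2]
            rw [hFab] at this
            simpa using this
          · intro hg
            have : g ∈ ({a, b} : Finset (Sym2 (Fin 5))) := by simpa using hg
            rw [← hFab] at this
            simpa using this
        rcases (hmem e).mp ⟨he, rfl⟩ with rfl | rfl
        · refine ⟨b, fun _ => ⟨((hmem b).mpr (Or.inr rfl)).1, hab.symm,
            ((hmem b).mpr (Or.inr rfl)).2, ?_⟩⟩
          intro g hg hge
          exact (hmem g).mp ⟨hg, hge⟩
        · refine ⟨a, fun _ => ⟨((hmem a).mpr (Or.inl rfl)).1, hab,
            ((hmem a).mpr (Or.inl rfl)).2, ?_⟩⟩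
          intro g hg hge
          exact ((hmem g).mp ⟨hg, hge⟩).symm
  choose pt hpt using hch
  have hptnd : ∀ e, ¬e.IsDiag → ¬(pt e).IsDiag := fun e he => (hpt e he).1
  have ptne : ∀ e, ¬e.IsDiag → pt e ≠ e := fun e he => (hpt e he).2.1
  have ptcol : ∀ e, ¬e.IsDiag → χ (pt e) = χ e := fun e he => (hpt e he).2.2.1
  have ptuniq : ∀ e, ¬e.IsDiag → ∀ g, ¬g.IsDiag → χ g = χ e → g = e ∨ g = pt e :=
    fun e he => (hpt e he).2.2.2
  have ptpt : ∀ e, ¬e.IsDiag → pt (pt e) = e := by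
    intro e he
    have h1 := hptnd e he
    rcases ptuniq (pt e) h1 e he (ptcol e he).symm with h | h
    · exact absurd h.symm (ptne e he)
    · exact h.symm
  have einj : ∀ e f : Sym2 (Fin 5), ¬e.IsDiag → ¬f.IsDiag → eidx e = eidx f → e = f := by
    intro e f he hf h
    have h1 := (hE1 e he).1
    rw [h, (hE1 f hf).1] at h1
    exact h1.symm
  set b : Fin 10 → Fin 10 :=
    fun i => (⟨eidx (pt (EE i.val)), (hE1 _ (hptnd _ (hE2 i).1)).2⟩ : Fin 10) with hbdef
  have hb : ∀ i : Fin 10, (b i).val = eidx (pt (EE i.val)) := fun _ => rfl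
  have hfpf : ∀ i, b i ≠ i := by
    intro i h
    have hv : eidx (pt (EE i.val)) = i.val := congrArg Fin.val h
    have : pt (EE i.val) = EE i.val :=
      einj _ _ (hptnd _ (hE2 i).1) (hE2 i).1 (by rw [hv, (hE2 i).2])
    exact ptne _ (hE2 i).1 this
  have hinv : ∀ i, b (b i) = i := by
    intro i
    apply Fin.ext
    show eidx (pt (EE (eidx (pt (EE i.val))))) = i.val
    have h1 : ¬(EE i.val).IsDiag := (hE2 i).1
    have h2 := hptnd _ h1
    rw [(hE1 _ h2).1, ptpt _ h1, (hE2 i).2]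
  have hne2 : ∀ i j : Fin 10, i ≠ j → b i ≠ b j :=
    fun i j hij h => hij (by rw [← hinv i, h, hinv j])
  have hsym : ∀ i j : Fin 10, (b i = j ↔ b j = i) :=
    fun i j => ⟨fun h => by rw [← h, hinv], fun h => by rw [← h, hinv]⟩
  have key := core (b 0) (hfpf 0) (b 1) ⟨hfpf 1, hne2 1 0 (by decide), hsym 0 1⟩ (b 2) ⟨hfpf 2, hne2 2 0 (by decide), hsym 0 2, hne2 2 1 (by decide), hsym 1 2⟩ (b 3) ⟨hfpf 3, hne2 3 0 (by decide), hsym 0 3, hne2 3 1 (by decide), hsym 1 3, hne2 3 2 (by decide), hsym 2 3⟩ (b 4) ⟨hfpf 4, hne2 4 0 (by decide), hsym 0 4, hne2 4 1 (by decide), hsym 1 4, hne2 4 2 (by decide), hsym 2 4, hne2 4 3 (by decide), hsym 3 4⟩ (b 5) ⟨hfpf 5, hne2 5 0 (by decide), hsym 0 5, hne2 5 1 (by decide), hsym 1 5, hne2 5 2 (by decide), hsym 2 5, hne2 5 3 (by decide), hsym 3 5, hne2 5 4 (by decide), hsym 4 5⟩ (b 6) ⟨hfpf 6, hne2 6 0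 (by decide), hsym 0 6, hne2 6 1 (by decide), hsym 1 6, hne2 6 2 (by decide), hsym 2 6, hne2 6 3 (by decide), hsym 3 6, hne2 6 4 (by decide), hsym 4 6, hne2 6 5 (by decide), hsym 5 6⟩ (b 7) ⟨hfpf 7, hne2 7 0 (by decide), hsym 0 7, hne2 7 1 (by decide), hsym 1 7, hne2 7 2 (by decide), hsym 2 7, hne2 7 3 (by decide), hsym 3 7, hne2 7 4 (by decide), hsym 4 7, hne2 7 5 (by decide), hsym 5 7, hne2 7 6 (by decide), hsym 6 7⟩ (b 8) ⟨hfpf 8, hne2 8 0 (by decide), hsym 0 8, hne2 8 1 (by decide), hsym 1 8, hne2 8 2 (by decide), hsym 2 8, hne2 8 3 (by decide), hsym 3 8, hne2 8 4 (by decide), hsym 4 8, hne2 8 5 (by decide), hsym 5 8, hne2 8 6 (by decide), hsym 6 8, hne2 8 7 (by decide), hsym 7 8⟩ (b 9) ⟨hfpf 9, hne2 9 0 (by decide), hsym 0 9, hne2 9 1 (by decide), hsym 1 9, hne2 9 2 (by decide), hsym 2 9, hne2 9 3 (by decide), hsym 3 9, hne2 9 4 (by decide), hsym 4 9, hne2 9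 5 (by decide), hsym 5 9, hne2 9 6 (by decide), hsym 6 9, hne2 9 7 (by decide), hsym 7 9, hne2 9 8 (by decide), hsym 8 9⟩
  set L : List ℕ := [(b 0 : ℕ), (b 1 : ℕ), (b 2 : ℕ), (b 3 : ℕ), (b 4 : ℕ),
    (b 5 : ℕ), (b 6 : ℕ), (b 7 : ℕ), (b 8 : ℕ), (b 9 : ℕ)] with hLdef
  set χL : Sym2 (Fin 5) → ℕ := mkCol L with hχLdef
  have hgd : ∀ k : Fin 10, L.getD k.val 0 = (b k).val := by
    intro k; fin_cases k <;> rfl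
  have hχL : ∀ e, ¬e.IsDiag → χL e = min (eidx e) (eidx (pt e)) := by
    intro e he
    have h10 := (hE1 e he).2
    show mkCol L e = _
    rw [mkCol, if_neg he]
    have h1 : L.getD (eidx e) 0 = (b ⟨eidx e, h10⟩).val := hgd ⟨eidx e, h10⟩
    rw [h1]
    show min (eidx e) (eidx (pt (EE (eidx e)))) = min (eidx e) (eidx (pt e))
    rw [(hE1 e he).1]
  have colorsEq : ∀ e f : Sym2 (Fin 5), ¬e.IsDiag → ¬f.IsDiag →
      (χL e = χL f ↔ χ e = χ f) := by
    intro e f he hf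
    rw [hχL e he, hχL f hf]
    constructor
    · intro h
      have hd : eidx e = eidx f ∨ eidx e = eidx (pt f) ∨ eidx (pt e) = eidx f ∨
          eidx (pt e) = eidx (pt f) := by omega
      rcases hd with h' | h' | h' | h'
      · rw [einj e f he hf h']
      · rw [einj e (pt f) he (hptnd f hf) h']
        exact ptcol f hf
      · rw [← einj (pt e) f (hptnd e he) hf h']
        exact (ptcol e he).symm
      · have : pt e = pt f := einj _ _ (hptnd e he) (hptnd f hf) h'
        have : e = f := by rw [← ptpt e he, this, ptpt f hf]
        rw [this]
    · intro h
      rcases ptuniq e he f hf h.symm with rfl | rfl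
      · rfl
      · rw [ptpt e he, Nat.min_comm]
  have hP1L : PropP1 χL := by
    rintro ⟨a, b', c, d, h1, h2, h3, h4, h5, h6, hc1, hc2⟩
    exact hP1 ⟨a, b', c, d, h1, h2, h3, h4, h5, h6,
      (colorsEq _ _ (ndiag h1) (ndiag h6)).mp hc1,
      (colorsEq _ _ (ndiag h2) (ndiag h3)).mp hc2⟩
  apply key hP1L
  refine ⟨v, ?_, ?_⟩
  · -- v is the center of a cherry for χL
    obtain ⟨l, hl⟩ := hv1
    rw [cherries, Finset.mem_filter] at hl
    obtain ⟨-, hcard, hnm, x, hx, y, hy, hxy, hcol⟩ := hl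
    have hvx : v ≠ x := fun h => hnm (h ▸ hx)
    have hvy : v ≠ y := fun h => hnm (h ▸ hy)
    rcases lt_or_gt_of_ne hxy with hlt | hlt
    · exact ⟨x, y, by
        rw [cherryT, Finset.mem_filter]
        exact ⟨Finset.mem_univ _, hlt, hvx, hvy,
          (colorsEq _ _ (ndiag hvx) (ndiag hvy)).mpr hcol⟩⟩
    · exact ⟨y, x, by
        rw [cherryT, Finset.mem_filter]
        exact ⟨Finset.mem_univ _, hlt, hvy, hvx,
          (colorsEq _ _ (ndiag hvy) (ndiag hvx)).mpr hcol.symm⟩⟩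
  · -- the count of cherries avoiding v is 1
    have hcardeq : ((cherryT χL).filter fun t => t.1 ≠ v ∧ t.2.1 ≠ v ∧ t.2.2 ≠ v).card =
        ((cherries χ).filter fun p => p.1 ≠ v ∧ v ∉ p.2).card := by
      apply Finset.card_bij (fun t _ => (t.1, ({t.2.1, t.2.2} : Finset (Fin 5))))
      · rintro ⟨u, x, y⟩ ht
        rw [Finset.mem_filter, cherryT, Finset.mem_filter] at ht
        obtain ⟨⟨-, hlt, hux, huy, hcol⟩, hQ1, hQ2, hQ3⟩ := ht
        dsimp only at hlt hux huy hcol hQ1 hQ2 hQ3 ⊢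
        rw [Finset.mem_filter, cherries, Finset.mem_filter]
        refine ⟨⟨Finset.mem_univ _, ?_, ?_, x, by simp, y, by simp, ne_of_lt hlt,
          (colorsEq _ _ (ndiag hux) (ndiag huy)).mp hcol⟩, hQ1, ?_⟩
        · exact Finset.card_pair (ne_of_lt hlt)
        · intro h
          rcases Finset.mem_insert.mp h with h' | h'
          · exact hux h'
          · exact huy (Finset.mem_singleton.mp h')
        · intro h
          rcases Finset.mem_insert.mp h with h' | h'
          · exact hQ2 h'.symm
          · exact hQ3 (Finset.mem_singleton.mp h').symm
      · rintro ⟨u, x, y⟩ ht ⟨u', x', y'⟩ ht' heq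
        rw [Finset.mem_filter, cherryT, Finset.mem_filter] at ht ht'
        obtain ⟨⟨-, hlt, -⟩, -⟩ := ht
        obtain ⟨⟨-, hlt', -⟩, -⟩ := ht'
        dsimp only at hlt hlt' heq
        have h1 : u = u' := congrArg Prod.fst heq
        have h2 : ({x, y} : Finset (Fin 5)) = {x', y'} := congrArg Prod.snd heq
        obtain ⟨hx, hy⟩ := pairEq hlt hlt' h2
        rw [Prod.mk.injEq, Prod.mk.injEq]
        exact ⟨h1, hx, hy⟩
      · rintro ⟨u, l⟩ hp
        rw [Finset.mem_filter, cherries, Finset.mem_filter] at hp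
        obtain ⟨⟨-, hcard, hnm, x, hx, y, hy, hxy, hcol⟩, hP1', hP2'⟩ := hp
        have hsub : ({x, y} : Finset (Fin 5)) ⊆ l := by
          intro z hz
          rcases Finset.mem_insert.mp hz with rfl | hz
          · exact hx
          · exact (Finset.mem_singleton.mp hz) ▸ hy
        have hleq : ({x, y} : Finset (Fin 5)) = l := by
          apply Finset.eq_of_subset_of_card_le hsub
          rw [hcard, Finset.card_pair hxy]
        have hux : u ≠ x := fun h => hnm (h ▸ hx)
        have huy : u ≠ y := fun h => hnm (h ▸ hy)
        have hxv : x ≠ v := fun h => hP2' (h ▸ hx)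
        have hyv : y ≠ v := fun h => hP2' (h ▸ hy)
        rcases lt_or_gt_of_ne hxy with hlt | hlt
        · refine ⟨(u, x, y), ?_, ?_⟩
          · rw [Finset.mem_filter, cherryT, Finset.mem_filter]
            exact ⟨⟨Finset.mem_univ _, hlt, hux, huy,
              (colorsEq _ _ (ndiag hux) (ndiag huy)).mpr hcol⟩, hP1', hxv, hyv⟩
          · dsimp only
            rw [Prod.mk.injEq]
            exact ⟨rfl, hleq⟩
        · refine ⟨(u, y, x), ?_, ?_⟩
          · rw [Finset.mem_filter, cherryT, Finset.mem_filter]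
            exact ⟨⟨Finset.mem_univ _, hlt, huy, hux,
              (colorsEq _ _ (ndiag huy) (ndiag hux)).mpr hcol.symm⟩, hP1', hyv, hxv⟩
          · dsimp only
            rw [Prod.mk.injEq, ← hleq]
            exact ⟨rfl, Finset.pair_comm y x⟩
    rw [hcardeq]
    exact hv2
end

section
/- Let X be a type, m ≥ 1 an integer, and k ≥ 3 an odd integer, and let v₀, v₁, …, v_{k−1} : Fin m → X be pairwise distinct functions. Then the k values η(v_j, v_{(j+1) mod k}) for j = 0, …, k−1 cannot all be equal; that is, the coloring η admits no monochromatic odd cycle. (This is the η-level content of Proposition 3.1(4).) -/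
/-- The coloring `η` admits no monochromatic odd cycle: for odd `k ≥ 3` and pairwise
distinct `v₀, …, v_{k-1}`, the `k` values `η(v_j, v_{(j+1) mod k})` cannot all be equal. -/
theorem eta_no_monochromatic_odd_cycle {X : Type*} {m k : ℕ} (hm : 1 ≤ m)
    (hk : 3 ≤ k) (hodd : Odd k)
    (v : Fin k → (Fin m → X)) (hinj : Function.Injective v) :
    ¬ ∃ r : Option (Fin m × Sym2 X),
        ∀ j : Fin k, eta (v j) (v ⟨(j.val + 1) % k, Nat.mod_lt _ (by omega)⟩) = r := by
  classical
  rintro ⟨r, hr⟩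
  -- each consecutive pair is distinct
  have hne : ∀ j : Fin k, v j ≠ v ⟨(j.val + 1) % k, Nat.mod_lt _ (by omega)⟩ := by
    intro j heq
    have := hinj heq
    rw [Fin.ext_iff] at this
    simp only at this
    have hjk := j.isLt
    have h2 : (j.val + 1) % k = if j.val + 1 = k then 0 else j.val + 1 := by
      split
      · rename_i h; rw [h, Nat.mod_self]
      · exact Nat.mod_eq_of_lt (by omega)
    rw [h2] at this
    split at this <;> omega
  -- r is some (i, p)
  obtain ⟨i, p, rfl⟩ : ∃ i p, r = some (i, p) := by
    have := hr ⟨0, by omega⟩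
    rw [eta, dif_pos (hne ⟨0, by omega⟩)] at this
    exact ⟨_, _, this.symm⟩
  obtain ⟨⟨a, b⟩, rfl⟩ := Quot.exists_rep p
  -- key: at index i, values differ and are {a,b}
  have key : ∀ j : Fin k,
      v j i ≠ v ⟨(j.val + 1) % k, Nat.mod_lt _ (by omega)⟩ i ∧
      s(v j i, v ⟨(j.val + 1) % k, Nat.mod_lt _ (by omega)⟩ i) = s(a, b) := by
    intro j
    have h := hr j
    rw [eta, dif_pos (hne j)] at h
    simp only [Option.some.injEq, Prod.mk.injEq] at h
    obtain ⟨h1, h2⟩ := h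
    set j' : Fin k := ⟨(j.val + 1) % k, Nat.mod_lt _ (by omega)⟩
    set s := (Finset.univ.filter fun i => v j i ≠ v j' i)
    have hmem : s.min' (by
        obtain ⟨i, hi⟩ := Function.ne_iff.mp (hne j)
        exact ⟨i, Finset.mem_filter.mpr ⟨Finset.mem_univ _, hi⟩⟩) ∈ s :=
      Finset.min'_mem _ _
    rw [h1] at hmem h2
    exact ⟨(Finset.mem_filter.mp hmem).2, h2⟩
  -- alternation
  have alt : ∀ n : ℕ, (v ⟨n % k, Nat.mod_lt _ (by omega)⟩ i = a) ↔
      ¬ (v ⟨(n + 1) % k, Nat.mod_lt _ (by omega)⟩ i = a) := by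
    intro n
    have hidx : ((n % k) + 1) % k = (n + 1) % k := Nat.mod_add_mod n k 1
    obtain ⟨hne', hsym⟩ := key ⟨n % k, Nat.mod_lt _ (by omega)⟩
    simp only [hidx] at hne' hsym
    rw [Sym2.eq_iff] at hsym
    rcases hsym with ⟨ha, hb⟩ | ⟨hb, ha⟩
    · constructor
      · intro _ h2
        exact hne' (ha.trans h2.symm)
      · intro _; exact ha
    · constructor
      · intro h1
        exact absurd (h1.trans ha.symm) hne'
      · intro h2
        exact (h2 ha).elim
  -- parity induction
  have par : ∀ n : ℕ, (v ⟨n % k, Nat.mod_lt _ (by omega)⟩ i = a) ↔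
      ((v ⟨0 % k, Nat.mod_lt _ (by omega)⟩ i = a) ↔ Even n) := by
    intro n
    induction n with
    | zero => simp
    | succ n ih =>
      have h1 := alt n
      rw [ih] at h1
      rw [Nat.even_add_one]
      tauto
  have hFk := par k
  rw [Nat.not_even_iff_odd.symm] at hodd
  have heq : (⟨k % k, Nat.mod_lt _ (by omega)⟩ : Fin k) = ⟨0 % k, Nat.mod_lt _ (by omega)⟩ := by
    apply Fin.ext
    simp
  rw [heq] at hFk
  tauto
end

section
/- Let X be a type, m ≥ 1 an integer, and let a, b, c, d : Fin m → X be pairwise distinct functions. Then it is impossible that the equalities η(a,b) = η(c,d), η(a,c) = η(b,d), η(a,d) = η(b,c) all hold with the three common values pairwise distinct; that is, the coloring η admits no striped K₄. (This is the η-level content of Proposition 3.1(2): a striped K₄ is a copy of K₄ whose three perfect matchings are monochromatic in three distinct colors.) -/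
lemma eta_eq_some {X : Type*} {m : ℕ} {v w : Fin m → X} (h : v ≠ w) :
    ∃ i, eta v w = some (i, s(v i, w i)) ∧ v i ≠ w i ∧ ∀ j, v j ≠ w j → i ≤ j := by
  classical
  have hne : (((Finset.univ : Finset (Fin m))).filter fun i => v i ≠ w i).Nonempty := by
    obtain ⟨i, hi⟩ := Function.ne_iff.mp h
    exact ⟨i, Finset.mem_filter.mpr ⟨Finset.mem_univ _, hi⟩⟩
  refine ⟨(((Finset.univ : Finset (Fin m))).filter fun i => v i ≠ w i).min' hne, ?_, ?_, ?_⟩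
  · rw [eta, dif_pos h]
  · have := Finset.min'_mem _ hne
    simpa using this
  · intro j hj
    have hjmem : j ∈ ((Finset.univ : Finset (Fin m)).filter fun i => v i ≠ w i) :=
      Finset.mem_filter.mpr ⟨Finset.mem_univ j, hj⟩
    exact Finset.min'_le _ j hjmem

lemma eta_key {X : Type*} {m : ℕ} {a b c d : Fin m → X} {i1 i2 i3 : Fin m}
    (hab1 : a i1 ≠ b i1) (hpair : s(a i1, b i1) = s(c i1, d i1))
    (e1 : eta a b = some (i1, s(a i1, b i1)))
    (e2 : eta a c = some (i2, s(a i2, c i2)))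
    (e3 : eta a d = some (i3, s(a i3, d i3)))
    (min2 : ∀ j, a j ≠ c j → i2 ≤ j)
    (min3 : ∀ j, a j ≠ d j → i3 ≤ j)
    (h12 : i1 ≤ i2) (h13 : i1 ≤ i3) :
    eta a b = eta a c ∨ eta a b = eta a d := by
  rcases Sym2.eq_iff.mp hpair with ⟨hac, hbd⟩ | ⟨had, hbc⟩
  · have hne : a i1 ≠ d i1 := fun h => hab1 (h.trans hbd.symm)
    have h31 : i3 = i1 := le_antisymm (min3 _ hne) h13
    subst h31
    right
    rw [e1, e3, hbd]
  · have hne : a i1 ≠ c i1 := fun h => hab1 (h.trans hbc.symm)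
    have h21 : i2 = i1 := le_antisymm (min2 _ hne) h12
    subst h21
    left
    rw [e1, e2, hbc]

/-- The coloring `η` admits no striped `K₄`: for pairwise distinct `a, b, c, d`, the
pattern `η(a,b)=η(c,d)`, `η(a,c)=η(b,d)`, `η(a,d)=η(b,c)` with the three common values
pairwise distinct is impossible. -/
theorem eta_no_striped_K4 {X : Type*} {m : ℕ} (hm : 1 ≤ m)
    (a b c d : Fin m → X)
    (hab : a ≠ b) (hac : a ≠ c) (had : a ≠ d)
    (hbc : b ≠ c) (hbd : b ≠ d) (hcd : c ≠ d) :
    ¬ (eta a b = eta c d ∧ eta a c = eta b d ∧ eta a d = eta b c ∧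
       eta a b ≠ eta a c ∧ eta a b ≠ eta a d ∧ eta a c ≠ eta a d) := by
  rintro ⟨h1, h2, h3, hd12, hd13, hd23⟩
  obtain ⟨i1, e1, hab1, min1⟩ := eta_eq_some hab
  obtain ⟨j1, f1, hcd1, min1'⟩ := eta_eq_some hcd
  obtain ⟨i2, e2, hac1, min2⟩ := eta_eq_some hac
  obtain ⟨j2, f2, hbd1, min2'⟩ := eta_eq_some hbd
  obtain ⟨i3, e3, had1, min3⟩ := eta_eq_some had
  obtain ⟨j3, f3, hbc1, min3'⟩ := eta_eq_some hbc
  rw [e1, f1] at h1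
  rw [e2, f2] at h2
  rw [e3, f3] at h3
  simp only [Option.some.injEq, Prod.mk.injEq] at h1 h2 h3
  obtain ⟨rfl, hp1⟩ := h1
  obtain ⟨rfl, hp2⟩ := h2
  obtain ⟨rfl, hp3⟩ := h3
  rcases le_total i1 i2 with h12 | h21
  · rcases le_total i1 i3 with h13 | h31
    · rcases eta_key hab1 hp1 e1 e2 e3 min2 min3 h12 h13 with h | h
      exacts [hd12 h, hd13 h]
    · rcases eta_key had1 hp3 e3 e1 e2 min1 min2 h31 (h31.trans h12) with h | h
      exacts [hd13 h.symm, hd23 h.symm]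
  · rcases le_total i2 i3 with h23 | h32
    · rcases eta_key hac1 hp2 e2 e1 e3 min1 min3 h21 h23 with h | h
      exacts [hd12 h.symm, hd23 h]
    · rcases eta_key had1 hp3 e3 e1 e2 min1 min2 (h32.trans h21) h32 with h | h
      exacts [hd13 h.symm, hd23 h.symm]
end
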